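/- arXiv:1704.05232 — 5 statements merged into one kernel-verified Lean document; each statement's English description precedes it below -/
import Mathlib

section
/- There is a universal constant c > 0 such that the following holds. For every ε with 0 < ε ≤ 1 and every finite family X of n ≥ 2 points in ℝ, there exists a finite set S ⊆ ℝ with |S| ≤ c · (log n)/√ε such that Σ_{x ∈ X} min_{s ∈ S} (x − s)² ≤ ε · Σ_{x ∈ X} x². -/
noncomputable def costR {n : ℕ} (S : Finset ℝ) (X : Fin n → ℝ) : ℝ :=
  ∑ i, sInf ((fun s => (X i - s) ^ 2) '' (S : Set ℝ))

/-!
Take as centers `0` and the symmetric geometric grid `±t (1 + r)ʲ`, `j ≤ N`, with `r = √ε / 2`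
and `t = ‖X‖ · √(ε / 4n)`. A point with `|x| ≤ t` pays at most `t²` (in total `ε/4 · ‖X‖²`);
a larger point lies between two consecutive grid points, so it pays at most `(r x)² = ε/4 · x²`.
Reaching `‖X‖` takes `N ≈ log (‖X‖ / t) / log (1 + r) = O(log (n / ε) / √ε)` steps, which is
`O(log n / √ε)` as long as `ε ≥ 1 / n²`. For smaller `ε` the points of `X` themselves are a
zero-cost set of at most `n < 1 / √ε` centers.
-/

open Finset Real

section Cost

variable {n : ℕ}

theorem costR_le_sum_of_forall_exists (S : Finset ℝ) (X B : Fin n → ℝ)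
    (h : ∀ i, ∃ s ∈ S, (X i - s) ^ 2 ≤ B i) : costR S X ≤ ∑ i, B i := by
  refine sum_le_sum fun i _ => ?_
  obtain ⟨s, hs, hsB⟩ := h i
  refine le_trans (csInf_le ⟨0, ?_⟩ ⟨s, hs, rfl⟩) hsB
  rintro _ ⟨u, -, rfl⟩
  positivity

theorem costR_image_self (X : Fin n → ℝ) : costR (univ.image X) X = 0 := by
  refine le_antisymm ?_ (sum_nonneg fun i _ => Real.sInf_nonneg ?_)
  · simpa using costR_le_sum_of_forall_exists _ X 0
      fun i => ⟨X i, mem_image_of_mem X (mem_univ i), by simp⟩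
  · rintro _ ⟨u, -, rfl⟩
    positivity

end Cost

section GeomGrid

noncomputable def geomGrid (t r : ℝ) (N : ℕ) : Finset ℝ :=
  let G := (range (N + 1)).image (fun j => t * (1 + r) ^ j)
  insert 0 (G ∪ G.image Neg.neg)

variable {t r : ℝ} {N : ℕ}

theorem zero_mem_geomGrid : (0 : ℝ) ∈ geomGrid t r N := mem_insert_self _ _

theorem card_geomGrid_le : (geomGrid t r N).card ≤ 2 * N + 3 := by
  set G := (range (N + 1)).image (fun j => t * (1 + r) ^ j)
  have hG : G.card ≤ N + 1 := card_range (N + 1) ▸ card_image_le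
  calc (geomGrid t r N).card ≤ G.card + (G.image Neg.neg).card + 1 :=
        (card_insert_le _ _).trans (Nat.add_le_add_right (card_union_le _ _) 1)
    _ ≤ 2 * N + 3 := by linarith [card_image_le (s := G) (f := Neg.neg)]

theorem exists_mem_geomGrid_sq_sub_le {x : ℝ} (ht : 0 ≤ t) (hr : 0 < r)
    (hx : |x| ≤ t * (1 + r) ^ N) :
    ∃ s ∈ geomGrid t r N, (x - s) ^ 2 ≤ t ^ 2 + (r * x) ^ 2 := by
  rcases le_or_gt |x| t with hxt | htx
  · refine ⟨0, zero_mem_geomGrid, ?_⟩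
    nlinarith [sq_abs x, abs_nonneg x, sq_nonneg (r * x)]
  have ht0 : 0 < t := ht.lt_of_ne <| by
    rintro rfl
    rw [zero_mul] at hx
    linarith
  have hr1 : 1 < 1 + r := by linarith
  obtain ⟨j, hjx, hxj⟩ := exists_nat_pow_near ((one_le_div ht0).2 htx.le) hr1
  have hjN : j ≤ N := (pow_le_pow_iff_right₀ hr1).1 (hjx.trans ((div_le_iff₀' ht0).2 hx))
  set s := t * (1 + r) ^ j
  have hsG : s ∈ (range (N + 1)).image (fun j => t * (1 + r) ^ j) :=
    mem_image_of_mem _ (mem_range.2 (by omega))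
  have hlow : s ≤ |x| := (le_div_iff₀' ht0).1 hjx
  have hhigh : |x| < s * (1 + r) := by
    rw [mul_assoc, ← pow_succ]; exact (div_lt_iff₀' ht0).1 hxj
  have hclose : (|x| - s) ^ 2 ≤ (r * x) ^ 2 :=
    calc (|x| - s) ^ 2 ≤ (r * |x|) ^ 2 :=
          pow_le_pow_left₀ (sub_nonneg.2 hlow) (by nlinarith) 2
      _ = (r * x) ^ 2 := by rw [mul_pow, mul_pow, sq_abs]
  rcases abs_choice x with hxa | hxa
  · refine ⟨s, mem_insert_of_mem (mem_union_left _ hsG), ?_⟩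
    rw [hxa] at hclose
    linarith [sq_nonneg t]
  · refine ⟨-s, mem_insert_of_mem (mem_union_right _ (mem_image_of_mem _ hsG)), ?_⟩
    rw [hxa] at hclose
    linarith [sq_nonneg t, show (x - -s) ^ 2 = (-x - s) ^ 2 by ring]

theorem exists_le_one_add_pow {y : ℝ} (hr0 : 0 < r) (hr1 : r ≤ 1) (hy : 1 ≤ y) :
    ∃ N : ℕ, y ≤ (1 + r) ^ N ∧ (N : ℝ) < 2 * log y / r + 1 := by
  have hlogr : r / 2 ≤ log (1 + r) := by
    have h := one_sub_inv_le_log_of_pos (show 0 < 1 + r by linarith)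
    have : r / 2 ≤ 1 - (1 + r)⁻¹ := by
      rw [inv_eq_one_div, le_sub_comm, div_le_iff₀ (by linarith)]
      nlinarith
    linarith
  have hlogr0 : 0 < log (1 + r) := by linarith
  have hlogy : 0 ≤ log y := log_nonneg hy
  refine ⟨⌈log y / log (1 + r)⌉₊, ?_, ?_⟩
  · rw [← log_le_log_iff (by linarith) (by positivity), log_pow, ← div_le_iff₀ hlogr0]
    exact Nat.le_ceil _
  · calc (⌈log y / log (1 + r)⌉₊ : ℝ) < log y / log (1 + r) + 1 :=
          Nat.ceil_lt_add_one (by positivity)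
      _ ≤ log y / (r / 2) + 1 := by gcongr
      _ = 2 * log y / r + 1 := by ring

end GeomGrid

theorem exists_card_lt_log_and_costR_le {ε : ℝ} (hε : 0 < ε) (hε1 : ε ≤ 1) {n : ℕ} (hn : 0 < n)
    (X : Fin n → ℝ) :
    ∃ S : Finset ℝ, S.Nonempty ∧ (S.card : ℝ) < 4 * log (4 * n / ε) / √ε + 5 ∧
      costR S X ≤ ε * ∑ i, X i ^ 2 := by
  have hsε : 0 < √ε := sqrt_pos.2 hε
  have hsε1 : √ε ≤ 1 := sqrt_le_one.2 hε1
  set Q := ∑ i, X i ^ 2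
  have hQ : 0 ≤ Q := sum_nonneg fun i _ => sq_nonneg _
  set y := √(4 * n / ε)
  have hy : 1 ≤ y := one_le_sqrt.2 <| (one_le_div hε).2 (by
    have : (1 : ℝ) ≤ n := by exact_mod_cast hn
    linarith)
  set t := √Q / y
  set r := √ε / 2
  have hr0 : 0 < r := by positivity
  have hr1 : r ≤ 1 := by simp only [r]; linarith
  obtain ⟨N, hyN, hN⟩ := exists_le_one_add_pow hr0 hr1 hy
  have hcover : ∀ i, |X i| ≤ t * (1 + r) ^ N := fun i => by
    have hXi : |X i| ≤ √Q :=
      abs_le_sqrt (single_le_sum (f := fun i => X i ^ 2) (fun i _ => sq_nonneg _) (mem_univ i))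
    calc |X i| ≤ t * y := by rwa [div_mul_cancel₀ _ (by positivity)]
      _ ≤ t * (1 + r) ^ N := by gcongr
  have hnt : n * t ^ 2 = ε / 4 * Q := by
    simp only [t, y, div_pow, sq_sqrt hQ, sq_sqrt (by positivity : (0 : ℝ) ≤ 4 * n / ε)]
    field_simp
  have hr2 : r ^ 2 = ε / 4 := by simp only [r, div_pow, sq_sqrt hε.le]; norm_num
  refine ⟨geomGrid t r N, ⟨0, zero_mem_geomGrid⟩, ?_, ?_⟩
  · have hlogy : log y = log (4 * n / ε) / 2 := log_sqrt (by positivity)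
    have hcard : ((geomGrid t r N).card : ℝ) ≤ 2 * N + 3 := by exact_mod_cast card_geomGrid_le
    calc ((geomGrid t r N).card : ℝ) < 2 * (2 * log y / r + 1) + 3 := by linarith
      _ = 4 * log (4 * n / ε) / √ε + 5 := by
        rw [hlogy]; simp only [r]; field_simp; ring
  · calc costR (geomGrid t r N) X ≤ ∑ i, (t ^ 2 + (r * X i) ^ 2) :=
          costR_le_sum_of_forall_exists _ X _ fun i =>
            exists_mem_geomGrid_sq_sub_le (by positivity) hr0 (hcover i)
      _ = n * t ^ 2 + r ^ 2 * Q := by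
        simp only [sum_add_distrib, sum_const, card_univ, Fintype.card_fin, nsmul_eq_mul,
          mul_pow, ← mul_sum, Q]
      _ ≤ ε * Q := by rw [hnt, hr2]; nlinarith [mul_nonneg hε.le hQ]

theorem log_four_mul_div_le {ε : ℝ} {n : ℕ} (hn : 2 ≤ n) (hε : 1 ≤ ε * n ^ 2) :
    log (4 * n / ε) ≤ 5 * log n := by
  have hn0 : (0 : ℝ) < n := by positivity
  have hε0 : 0 < ε := pos_of_mul_pos_left (by linarith) (by positivity : (0 : ℝ) ≤ n ^ 2)
  have hlog2 : log 2 ≤ log n := log_le_log (by norm_num) (by exact_mod_cast hn)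
  have hlogε : -(2 * log n) ≤ log ε := by
    have := log_le_log (by positivity) ((div_le_iff₀ (by positivity)).2 (by linarith) :
      1 / (n : ℝ) ^ 2 ≤ ε)
    rwa [one_div, log_inv, log_pow, Nat.cast_ofNat] at this
  rw [log_div (by positivity) hε0.ne', log_mul (by norm_num) hn0.ne',
    show (4 : ℝ) = 2 ^ 2 by norm_num, log_pow, Nat.cast_ofNat]
  linarith

/-- There is a universal constant `c > 0` such that for every
`0 < ε ≤ 1` and every family `X` of `n ≥ 2` points in `ℝ`, there is a finite set
`S ⊆ ℝ` with `|S| ≤ c · log n / √ε` and `Φ(S, X) ≤ ε · Σ_{x ∈ X} x²`. -/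
theorem oneDim_kmeans_upper_bound :
    ∃ c : ℝ, 0 < c ∧
      ∀ ε : ℝ, 0 < ε → ε ≤ 1 →
      ∀ n : ℕ, 2 ≤ n →
      ∀ X : Fin n → ℝ,
        ∃ S : Finset ℝ, S.Nonempty ∧
          (S.card : ℝ) ≤ c * Real.log n / Real.sqrt ε ∧
          costR S X ≤ ε * ∑ i, (X i) ^ 2 := by
  refine ⟨30, by norm_num, fun ε hε hε1 n hn X => ?_⟩
  have hsε : 0 < √ε := sqrt_pos.2 hε
  have hsε1 : √ε ≤ 1 := sqrt_le_one.2 hε1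
  have hlogn : 1 ≤ 2 * log n := by
    have := log_le_log (by norm_num) (show (2 : ℝ) ≤ n by exact_mod_cast hn)
    linarith [log_two_gt_d9]
  by_cases hsmall : ε * n ^ 2 < 1
  · have hcard : ((univ.image X).card : ℝ) ≤ n := by
      simpa using (card_image_le (s := univ) (f := X))
    have hnε : n * √ε < 1 := by
      refine lt_of_pow_lt_pow_left₀ 2 zero_le_one ?_
      rw [mul_pow, sq_sqrt hε.le]; linarith
    refine ⟨univ.image X, ⟨X ⟨0, by omega⟩, mem_image_of_mem X (mem_univ _)⟩, ?_,
      by rw [costR_image_self]; positivity⟩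
    rw [le_div_iff₀ hsε]
    nlinarith [mul_le_mul_of_nonneg_right hcard hsε.le]
  · obtain ⟨S, hS, hcard, hcost⟩ := exists_card_lt_log_and_costR_le hε hε1 (by omega) X
    have hlog := log_four_mul_div_le hn (not_lt.1 hsmall)
    refine ⟨S, hS, ?_, hcost⟩
    have h := mul_lt_mul_of_pos_right hcard hsε
    rw [add_mul, div_mul_cancel₀ _ hsε.ne'] at h
    rw [le_div_iff₀ hsε]
    linarith
end

section
/- There is a universal constant c > 0 such that for every ε with 0 < ε < 1/8 there exist arbitrarily large integers n and a family X of n points in ℝ (points may be repeated) with the following property: every finite set S ⊆ ℝ satisfying Σ_{x ∈ X} min_{s ∈ S} (x − s)² ≤ ε · Σ_{x ∈ X} x² has cardinality |S| ≥ c · (log n)/√ε. -/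
open Finset Real

noncomputable def sqInfDist (S : Finset ℝ) (x : ℝ) : ℝ :=
  sInf ((fun s => (x - s) ^ 2) '' (S : Set ℝ))

lemma costR_eq_sum_sqInfDist {n : ℕ} (S : Finset ℝ) (X : Fin n → ℝ) :
    costR S X = ∑ i, sqInfDist S (X i) := rfl

lemma sqInfDist_nonneg (S : Finset ℝ) (x : ℝ) : 0 ≤ sqInfDist S x :=
  Real.sInf_nonneg <| by rintro _ ⟨y, -, rfl⟩; positivity

lemma exists_mem_dist_le_of_sqInfDist_le {S : Finset ℝ} (hS : S.Nonempty) {x δ : ℝ} (hδ : 0 ≤ δ)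
    (h : sqInfDist S x ≤ δ ^ 2) : ∃ y ∈ S, dist x y ≤ δ := by
  obtain ⟨y, hyS, hy⟩ :=
    ((Finset.coe_nonempty.2 hS).image (fun s => (x - s) ^ 2)).csInf_mem (S.finite_toSet.image _)
  refine ⟨y, hyS, ?_⟩
  rw [Real.dist_eq]
  exact abs_le_of_sq_le_sq (hy.trans_le h) hδ

theorem card_le_card_of_forall_exists_dist_le {α ι : Type*} [PseudoMetricSpace α]
    {S : Finset α} {J : Finset ι} {x : ι → α} {δ : ι → ℝ}
    (hsep : ∀ j ∈ J, ∀ k ∈ J, j ≠ k → δ j + δ k < dist (x j) (x k))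
    (hnear : ∀ j ∈ J, ∃ y ∈ S, dist (x j) y ≤ δ j) : #J ≤ #S := by
  refine card_le_card_of_forall_subsingleton (fun j y => dist (x j) y ≤ δ j) hnear ?_
  rintro y - j ⟨hj, hjy⟩ k ⟨hk, hky⟩
  by_contra hne
  linarith [hsep j hj k hk hne, dist_triangle_right (x j) (x k) y]

lemma card_filter_lt_mul_le_sum {ι : Type*} (s : Finset ι) {f : ι → ℝ}
    (hf : ∀ i ∈ s, 0 ≤ f i) (t : ℝ) : #{i ∈ s | t < f i} * t ≤ ∑ i ∈ s, f i :=
  calc #{i ∈ s | t < f i} * t = ∑ i ∈ s with t < f i, t := by simp [mul_comm]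
    _ ≤ ∑ i ∈ s with t < f i, f i := sum_le_sum fun i hi => (mem_filter.1 hi).2.le
    _ ≤ ∑ i ∈ s, f i := sum_le_sum_of_subset_of_nonneg (filter_subset _ _) fun i hi _ => hf i hi

lemma card_div_two_le_card_filter_le {ι : Type*} (s : Finset ι) {f : ι → ℝ}
    (hf : ∀ i ∈ s, 0 ≤ f i) {t : ℝ} (ht : 0 < t) (hsum : ∑ i ∈ s, f i ≤ t * #s / 2) :
    (#s : ℝ) / 2 ≤ #{i ∈ s | f i ≤ t} := by
  have hsplit : (#{i ∈ s | f i ≤ t} : ℝ) + #{i ∈ s | ¬ f i ≤ t} = #s := by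
    exact_mod_cast card_filter_add_card_filter_not (s := s) (fun i => f i ≤ t)
  have hbad := card_filter_lt_mul_le_sum s hf t
  simp only [not_le] at hsplit
  nlinarith

def replicateFamily {α : Type*} {m : ℕ} (w : Fin m → ℕ) (v : Fin m → α) :
    Fin (∑ j, w j) → α :=
  fun i => v (finSigmaFinEquiv.symm i).1

lemma sum_replicateFamily {α M : Type*} [AddCommMonoid M] {m : ℕ} (w : Fin m → ℕ)
    (v : Fin m → α) (F : α → M) : ∑ i, F (replicateFamily w v i) = ∑ j, w j • F (v j) := by
  rw [← finSigmaFinEquiv.sum_comp]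
  simp [replicateFamily, Fintype.sum_sigma]

noncomputable def geomFamily (a : ℝ) (m : ℕ) : Fin (∑ j : Fin m, ⌈(a ^ (j : ℕ)) ^ 2⌉₊) → ℝ :=
  replicateFamily (fun j => ⌈(a ^ (j : ℕ)) ^ 2⌉₊) (fun j => (a ^ (j : ℕ))⁻¹)

section geomFamily

variable {a : ℝ} {m : ℕ}

lemma le_card_geomFamily (ha : 0 < a) : m ≤ ∑ j : Fin m, ⌈(a ^ (j : ℕ)) ^ 2⌉₊ := by
  calc m = ∑ _j : Fin m, 1 := by simp
    _ ≤ _ := sum_le_sum fun j _ => Nat.one_le_ceil_iff.2 (by positivity)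

lemma card_geomFamily_le (ha : 1 ≤ a) :
    ((∑ j : Fin m, ⌈(a ^ (j : ℕ)) ^ 2⌉₊ : ℕ) : ℝ) ≤ 2 * m * a ^ (2 * m) := by
  push_cast
  calc ∑ j : Fin m, (⌈(a ^ (j : ℕ)) ^ 2⌉₊ : ℝ) ≤ ∑ _j : Fin m, 2 * a ^ (2 * m) := by
        refine sum_le_sum fun j _ => (Nat.ceil_le_two_mul ?_).trans ?_
        · nlinarith [one_le_pow₀ (n := (j : ℕ)) ha]
        · rw [← pow_mul]
          gcongr 2 * ?_
          exact pow_le_pow_right₀ ha (by omega)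
    _ = 2 * m * a ^ (2 * m) := by simp; ring

lemma sum_sq_geomFamily_le (ha : 1 ≤ a) : ∑ i, geomFamily a m i ^ 2 ≤ 2 * m := by
  rw [geomFamily, sum_replicateFamily _ _ (· ^ 2)]
  calc ∑ j : Fin m, ⌈(a ^ (j : ℕ)) ^ 2⌉₊ • ((a ^ (j : ℕ))⁻¹) ^ 2 ≤ ∑ _j : Fin m, (2 : ℝ) := by
        refine sum_le_sum fun j _ => ?_
        have hu : 1 ≤ a ^ (j : ℕ) := one_le_pow₀ ha
        rw [nsmul_eq_mul, inv_pow, ← div_eq_mul_inv, div_le_iff₀ (by positivity)]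
        exact Nat.ceil_le_two_mul (by nlinarith)
    _ = 2 * m := by simp [mul_comm]

lemma sum_sq_mul_sqInfDist_le_costR (S : Finset ℝ) :
    ∑ j : Fin m, (a ^ (j : ℕ)) ^ 2 * sqInfDist S (a ^ (j : ℕ))⁻¹ ≤ costR S (geomFamily a m) := by
  rw [costR_eq_sum_sqInfDist, geomFamily, sum_replicateFamily _ _ (sqInfDist S)]
  exact sum_le_sum fun j _ => by
    rw [nsmul_eq_mul]; exact mul_le_mul_of_nonneg_right (Nat.le_ceil _) (sqInfDist_nonneg _ _)

end geomFamily

lemma add_lt_dist_inv_pow_of_lt {a r : ℝ} (ha : 1 ≤ a) (hsep : 1 + r < a * (1 - r))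
    {j k : ℕ} (hjk : j < k) : r * (a ^ j)⁻¹ + r * (a ^ k)⁻¹ < dist (a ^ j)⁻¹ (a ^ k)⁻¹ := by
  have hv : 0 < (a ^ k)⁻¹ := by positivity
  have hav : a * (a ^ k)⁻¹ ≤ (a ^ j)⁻¹ := by
    rw [← div_eq_mul_inv, div_le_iff₀ (by positivity), ← div_eq_inv_mul,
      le_div_iff₀ (by positivity), ← pow_succ']
    exact pow_le_pow_right₀ ha hjk
  have hr1 : 0 < 1 - r := by nlinarith
  rw [Real.dist_eq, abs_of_nonneg (by nlinarith)]
  nlinarith [mul_le_mul_of_nonneg_left hav hr1.le, mul_lt_mul_of_pos_right hsep hv]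

lemma add_lt_dist_inv_pow {a r : ℝ} (ha : 1 ≤ a) (hsep : 1 + r < a * (1 - r))
    {j k : ℕ} (hjk : j ≠ k) : r * (a ^ j)⁻¹ + r * (a ^ k)⁻¹ < dist (a ^ j)⁻¹ (a ^ k)⁻¹ := by
  rcases hjk.lt_or_gt with h | h
  · exact add_lt_dist_inv_pow_of_lt ha hsep h
  · rw [add_comm, dist_comm]; exact add_lt_dist_inv_pow_of_lt ha hsep h

lemma two_mul_le_one_add_pow {x : ℝ} (hx : 0 ≤ x) {m : ℕ} (hm : 2 ≤ x ^ 2 * m) :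
    2 * m ≤ (1 + x) ^ (2 * m) := by
  have h := one_add_mul_le_pow (by linarith : (-2 : ℝ) ≤ x) m
  have hmx : (m * x) ^ 2 ≤ ((1 + x) ^ m) ^ 2 := pow_le_pow_left₀ (by positivity) (by linarith) 2
  rw [pow_mul']
  nlinarith

lemma log_card_geomFamily_le {x : ℝ} (hx : 0 ≤ x) {m : ℕ} (hm : 2 ≤ x ^ 2 * m) :
    Real.log (∑ j : Fin m, ⌈((1 + x) ^ (j : ℕ)) ^ 2⌉₊ : ℕ) ≤ 4 * m * x := by
  have hn : (m : ℝ) ≤ (∑ j : Fin m, ⌈((1 + x) ^ (j : ℕ)) ^ 2⌉₊ : ℕ) := by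
    exact_mod_cast le_card_geomFamily (by linarith)
  have hm0 : (0 : ℝ) < m := by
    by_contra! h
    nlinarith [sq_nonneg x]
  calc Real.log (∑ j : Fin m, ⌈((1 + x) ^ (j : ℕ)) ^ 2⌉₊ : ℕ)
      ≤ Real.log ((1 + x) ^ (2 * m) * (1 + x) ^ (2 * m)) := by
        refine Real.log_le_log (by linarith) ((card_geomFamily_le (by linarith)).trans ?_)
        exact mul_le_mul_of_nonneg_right (two_mul_le_one_add_pow hx hm) (by positivity)
    _ = 4 * m * Real.log (1 + x) := by
        rw [← pow_add, Real.log_pow]; push_cast; ring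
    _ ≤ 4 * m * x := by
        gcongr
        linarith [Real.log_le_sub_one_of_pos (by linarith : 0 < 1 + x)]

theorem half_le_card_of_costR_geomFamily_le {a δ : ℝ} {m : ℕ} {S : Finset ℝ} (ha : 1 ≤ a)
    (hδ : 0 < δ) (hsep : 1 + 2 * δ < a * (1 - 2 * δ)) (hS : S.Nonempty)
    (hcost : costR S (geomFamily a m) ≤ δ ^ 2 * ∑ i, geomFamily a m i ^ 2) :
    (m : ℝ) / 2 ≤ #S := by
  set e : Fin m → ℝ := fun j => (a ^ (j : ℕ)) ^ 2 * sqInfDist S (a ^ (j : ℕ))⁻¹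
  have he : ∀ j ∈ univ, 0 ≤ e j := fun j _ => mul_nonneg (sq_nonneg _) (sqInfDist_nonneg _ _)
  have hsum : ∑ j, e j ≤ 4 * δ ^ 2 * #(univ : Finset (Fin m)) / 2 := by
    calc ∑ j, e j ≤ δ ^ 2 * ∑ i, geomFamily a m i ^ 2 :=
          (sum_sq_mul_sqInfDist_le_costR S).trans hcost
      _ ≤ δ ^ 2 * (2 * m) := by gcongr; exact sum_sq_geomFamily_le ha
      _ = _ := by rw [card_univ, Fintype.card_fin]; ring
  have hgood := card_div_two_le_card_filter_le univ he (by positivity) hsum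
  rw [card_univ, Fintype.card_fin] at hgood
  set good : Finset (Fin m) := {j | e j ≤ 4 * δ ^ 2}
  have hnear : ∀ j ∈ good,
      ∃ y ∈ S, dist (a ^ (j : ℕ))⁻¹ y ≤ 2 * δ * (a ^ (j : ℕ))⁻¹ := by
    intro j hj
    refine exists_mem_dist_le_of_sqInfDist_le hS (by positivity) ?_
    have hj : (a ^ (j : ℕ)) ^ 2 * sqInfDist S (a ^ (j : ℕ))⁻¹ ≤ 4 * δ ^ 2 := (mem_filter.1 hj).2
    have hu : 0 < a ^ (j : ℕ) := by positivity
    rw [mul_pow, inv_pow, ← div_eq_mul_inv, le_div_iff₀ (by positivity)]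
    linarith
  have hgood_le : #good ≤ #S := card_le_card_of_forall_exists_dist_le
    (fun j _ k _ hjk => add_lt_dist_inv_pow ha hsep (Fin.val_injective.ne hjk)) hnear
  calc (m : ℝ) / 2 ≤ #good := hgood
    _ ≤ #S := by exact_mod_cast hgood_le

/-- There is a universal constant `c > 0` such that for every
`0 < ε < 1/8` there are arbitrarily large `n` and a family `X` of `n` points in `ℝ`
(repetitions allowed) such that every finite nonempty set `S ⊆ ℝ` with
`Φ(S, X) ≤ ε · Σ_{x ∈ X} x²` has `|S| ≥ c · log n / √ε`. -/
theorem oneDim_kmeans_lower_bound :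
    ∃ c : ℝ, 0 < c ∧
      ∀ ε : ℝ, 0 < ε → ε < 1 / 8 →
      ∀ N : ℕ, ∃ n : ℕ, N ≤ n ∧
        ∃ X : Fin n → ℝ,
          ∀ S : Finset ℝ, S.Nonempty →
            costR S X ≤ ε * ∑ i, (X i) ^ 2 →
            c * Real.log n / Real.sqrt ε ≤ (S.card : ℝ) := by
  refine ⟨1 / 112, by norm_num, fun ε hε hε8 N => ?_⟩
  set s := √ε
  have hs : 0 < s := Real.sqrt_pos.2 hε
  have hs2 : s ^ 2 = ε := Real.sq_sqrt hε.le
  obtain ⟨m, hNm, hεm⟩ : ∃ m : ℕ, N ≤ m ∧ 1 ≤ ε * m := by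
    refine ⟨max N ⌈1 / ε⌉₊, le_max_left _ _, ?_⟩
    rw [← div_le_iff₀' hε]
    exact (Nat.le_ceil _).trans (by exact_mod_cast le_max_right _ _)
  refine ⟨_, hNm.trans (le_card_geomFamily (a := 1 + 14 * s) (by positivity)),
    geomFamily (1 + 14 * s) m, fun S hS hcost => ?_⟩
  rw [← hs2] at hcost
  -- the separation condition `1 + 2s < (1 + 14s)(1 - 2s)` amounts to `s < 5 / 14`
  have hcard : (m : ℝ) / 2 ≤ #S :=
    half_le_card_of_costR_geomFamily_le (by linarith) hs (by nlinarith) hS hcost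
  have hlog := log_card_geomFamily_le (x := 14 * s) (m := m) (by positivity) (by nlinarith)
  calc 1 / 112 * Real.log _ / s ≤ (m : ℝ) / 2 := by
        rw [div_le_iff₀ hs]; linarith
    _ ≤ #S := hcard
end

section
/- There is a universal constant c > 0 such that the following holds. Let d ≥ 2 and let N(S^{d-1}, δ) denote the covering number of the unit sphere in ℝ^d at scale δ. For every ε with 0 < ε ≤ 1, every integer k ≥ 1, and every finite family X of n ≥ 2 points in ℝ^d, there exists a finite set ξ ⊆ ℝ^d with |ξ| ≤ c · N(S^{d-1}, √(ε/2)) · k · (log n)/√ε such that Φ(ξ, X) ≤ ε · Δ_k(X). -/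
/-- k-means cost of a family `X : Fin n → ℝ^d` with respect to a finite
(nonempty) center set `C ⊆ ℝ^d`: `Φ(C, X) = Σ_i min_{c ∈ C} ‖X i − c‖²`. -/
noncomputable def kmeansCost {d n : ℕ} (C : Finset (EuclideanSpace ℝ (Fin d)))
    (X : Fin n → EuclideanSpace ℝ (Fin d)) : ℝ :=
  ∑ i, sInf ((fun c => dist (X i) c ^ 2) '' (C : Set (EuclideanSpace ℝ (Fin d))))

/-- Optimal k-means cost `Δ_k(X)`: infimum of `Φ(C, X)` over sets `C ⊆ ℝ^d`
with `|C| = k`. -/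
noncomputable def kmeansOpt {d n : ℕ} (k : ℕ) (X : Fin n → EuclideanSpace ℝ (Fin d)) : ℝ :=
  sInf {r : ℝ | ∃ C : Finset (EuclideanSpace ℝ (Fin d)), C.card = k ∧ kmeansCost C X = r}

/-- Covering number `N(S^{d-1}, δ)` of the unit sphere in `ℝ^d` at scale `δ`:
the minimum cardinality of a set `S` of unit vectors such that every unit vector
is within Euclidean distance `δ` of some element of `S`. -/
noncomputable def coveringNumber (d : ℕ) (δ : ℝ) : ℕ :=
  sInf {m : ℕ | ∃ S : Finset (EuclideanSpace ℝ (Fin d)), S.card = m ∧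
    (∀ p ∈ S, ‖p‖ = 1) ∧
    ∀ x : EuclideanSpace ℝ (Fin d), ‖x‖ = 1 → ∃ s ∈ S, dist x s ≤ δ}

/-!
Start from centers `C` whose cost `P` is within a factor `9/8` of `Δ_k(X)`. A point at distance
`D > 0` from its nearest center `c`, in direction `u`, is approximated by `c + r • s`, where `s`
is a point of a `√(ε/2)`-net of the sphere close to `u` and `r ≤ D` is a nearby radius; the error
is at most `√(ε/2) D + (D - r)`. With `b = √(P / 72n)`, the radii `j √ε b ≤ b` (about `1/√ε` of
them) and `b (1 + √ε/16)^j ≤ √P` (about `log n / √ε` of them) achieve `D - r ≤ √ε b + (√ε/16) D`,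
and summing the squared errors over the points gives cost at most `(8/9) ε P ≤ ε Δ_k(X)`.
If `X` takes at most `k` values, these values themselves have cost `0`.
-/

open Finset

section KMeans

variable {d n : ℕ} {X : Fin n → EuclideanSpace ℝ (Fin d)} {C : Finset (EuclideanSpace ℝ (Fin d))}

lemma kmeansCost_nonneg : 0 ≤ kmeansCost C X :=
  sum_nonneg fun _ _ => Real.sInf_nonneg <| by rintro _ ⟨c, -, rfl⟩; positivity

lemma kmeansCost_eq_sum_inf' (hC : C.Nonempty) :
    kmeansCost C X = ∑ i, C.inf' hC fun c => dist (X i) c ^ 2 := by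
  simp only [kmeansCost, inf'_eq_csInf_image]

lemma kmeansCost_le_sum (hC : C.Nonempty) {f : Fin n → ℝ}
    (h : ∀ i, ∃ c ∈ C, dist (X i) c ^ 2 ≤ f i) : kmeansCost C X ≤ ∑ i, f i := by
  rw [kmeansCost_eq_sum_inf' hC]
  gcongr with i
  obtain ⟨c, hc, hcf⟩ := h i
  exact (inf'_le _ hc).trans hcf

lemma kmeansCost_image_self [DecidableEq (EuclideanSpace ℝ (Fin d))] [Nonempty (Fin n)] :
    kmeansCost (univ.image X) X = 0 := by
  refine le_antisymm ?_ kmeansCost_nonneg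
  simpa using kmeansCost_le_sum (univ_nonempty.image X) (f := 0)
    fun i => ⟨X i, mem_image_of_mem X (mem_univ i), by simp⟩

lemma kmeansOpt_nonneg (k : ℕ) : 0 ≤ kmeansOpt k X :=
  Real.sInf_nonneg <| by rintro _ ⟨C, -, rfl⟩; exact kmeansCost_nonneg

lemma kmeansOpt_le_kmeansCost {k : ℕ} (hC : C.card = k) : kmeansOpt k X ≤ kmeansCost C X :=
  csInf_le ⟨0, by rintro _ ⟨C, -, rfl⟩; exact kmeansCost_nonneg⟩ ⟨C, hC, rfl⟩

lemma exists_kmeansCost_lt_of_kmeansOpt_lt {k : ℕ} {a : ℝ}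
    (hk : ∃ C : Finset (EuclideanSpace ℝ (Fin d)), C.card = k) (h : kmeansOpt k X < a) :
    ∃ C : Finset (EuclideanSpace ℝ (Fin d)), C.card = k ∧ kmeansCost C X < a := by
  obtain ⟨C, hC⟩ := hk
  unfold kmeansOpt at h
  obtain ⟨_, ⟨C, hCk, rfl⟩, hlt⟩ := exists_lt_of_csInf_lt (by exact ⟨_, C, hC, rfl⟩) h
  exact ⟨C, hCk, hlt⟩

/-- Pigeonhole: two distinct values of `X` share a nearest center. -/
lemma exists_sq_dist_le_four_mul_kmeansCost [DecidableEq (EuclideanSpace ℝ (Fin d))]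
    (hC : C.Nonempty) (hCX : C.card < (univ.image X).card) :
    ∃ i j, X i ≠ X j ∧ dist (X i) (X j) ^ 2 ≤ 4 * kmeansCost C X := by
  have hnear : ∀ x, ∃ c ∈ C, C.inf' hC (fun c => dist x c ^ 2) = dist x c ^ 2 :=
    fun x => exists_mem_eq_inf' hC _
  choose f hfC hf using hnear
  obtain ⟨_, hx, _, hy, hxy, hfxy⟩ :=
    exists_ne_map_eq_of_card_lt_of_maps_to hCX fun x _ => hfC x
  obtain ⟨i, -, rfl⟩ := mem_image.mp hx
  obtain ⟨j, -, rfl⟩ := mem_image.mp hy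
  refine ⟨i, j, hxy, ?_⟩
  have hij : i ≠ j := fun h => hxy (h ▸ rfl)
  have hsum : dist (X i) (f (X i)) ^ 2 + dist (X j) (f (X j)) ^ 2 ≤ kmeansCost C X := by
    rw [kmeansCost_eq_sum_inf' hC, ← hf, ← hf,
      ← sum_pair hij (f := fun i => C.inf' hC fun c => dist (X i) c ^ 2)]
    exact sum_le_sum_of_subset_of_nonneg (subset_univ _) fun _ _ _ =>
      le_inf' hC _ fun _ _ => by positivity
  have htri : dist (X i) (X j) ≤ dist (X i) (f (X i)) + dist (X j) (f (X j)) :=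
    hfxy ▸ dist_triangle_right _ _ _
  nlinarith [dist_nonneg (x := X i) (y := X j),
    sq_nonneg (dist (X i) (f (X i)) - dist (X j) (f (X j)))]

lemma kmeansOpt_pos [DecidableEq (EuclideanSpace ℝ (Fin d))] {k : ℕ} (hk : 1 ≤ k)
    (hkX : k < (univ.image X).card) : 0 < kmeansOpt k X := by
  have hoff : ((univ.image X).offDiag).Nonempty := by
    obtain ⟨x, hx, y, hy, hxy⟩ := one_lt_card.mp (hk.trans_lt hkX)
    exact ⟨(x, y), mem_offDiag.mpr ⟨hx, hy, hxy⟩⟩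
  obtain ⟨p, hp, hpmin⟩ := exists_min_image _ (fun p => dist p.1 p.2) hoff
  have hρ : 0 < dist p.1 p.2 := dist_pos.mpr (mem_offDiag.mp hp).2.2
  obtain ⟨C₀, -, hC₀⟩ := exists_subset_card_eq hkX.le
  have hlower : dist p.1 p.2 ^ 2 / 4 ≤ kmeansOpt k X := by
    refine le_csInf ⟨_, C₀, hC₀, rfl⟩ ?_
    rintro _ ⟨C, hCk, rfl⟩
    obtain ⟨i, j, hij, hcost⟩ := exists_sq_dist_le_four_mul_kmeansCost
      (card_pos.mp (hCk ▸ hk)) (hCk ▸ hkX)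
    have := hpmin (X i, X j) (mem_offDiag.mpr ⟨mem_image_of_mem X (mem_univ i),
      mem_image_of_mem X (mem_univ j), hij⟩)
    nlinarith [pow_le_pow_left₀ hρ.le this 2]
  exact lt_of_lt_of_le (by positivity) hlower

end KMeans

section Geometry

variable {E : Type*} [NormedAddCommGroup E] [NormedSpace ℝ E]

lemma dist_add_smul_le {s : E} (hs : ‖s‖ = 1) (x c : E) (r : ℝ) :
    dist x (c + r • s) ≤ ‖x - c - ‖x - c‖ • s‖ + |‖x - c‖ - r| := by
  have hsplit : x - (c + r • s) = (x - c - ‖x - c‖ • s) + (‖x - c‖ - r) • s := by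
    rw [sub_smul]; abel
  rw [dist_eq_norm, hsplit]
  refine (norm_add_le _ _).trans_eq ?_
  rw [norm_smul, hs, mul_one, Real.norm_eq_abs]

lemma exists_mem_norm_sub_norm_smul_le {S : Finset E} {δ : ℝ} (hS : S.Nonempty)
    (hcov : ∀ u : E, ‖u‖ = 1 → ∃ s ∈ S, dist u s ≤ δ) (v : E) :
    ∃ s ∈ S, ‖v - ‖v‖ • s‖ ≤ δ * ‖v‖ := by
  rcases eq_or_ne v 0 with rfl | hv
  · obtain ⟨s, hs⟩ := hS
    exact ⟨s, hs, by simp⟩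
  have hv' : 0 < ‖v‖ := norm_pos_iff.mpr hv
  obtain ⟨s, hs, hus⟩ :=
    hcov (‖v‖⁻¹ • v) (by rw [norm_smul, norm_inv, norm_norm, inv_mul_cancel₀ hv'.ne'])
  refine ⟨s, hs, ?_⟩
  have : v - ‖v‖ • s = ‖v‖ • (‖v‖⁻¹ • v - s) := by
    rw [smul_sub, smul_smul, mul_inv_cancel₀ hv'.ne', one_smul]
  rw [this, norm_smul, norm_norm, ← dist_eq_norm, mul_comm]
  gcongr

end Geometry

lemma exists_sphere_net (d : ℕ) {δ : ℝ} (hδ : 0 < δ) :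
    ∃ S : Finset (EuclideanSpace ℝ (Fin d)), S.card = coveringNumber d δ ∧
      (∀ p ∈ S, ‖p‖ = 1) ∧ ∀ x : EuclideanSpace ℝ (Fin d), ‖x‖ = 1 → ∃ s ∈ S, dist x s ≤ δ := by
  obtain ⟨t, hts, ht, hcov⟩ :=
    finite_cover_balls_of_compact (isCompact_sphere (0 : EuclideanSpace ℝ (Fin d)) 1) hδ
  have hne : {m : ℕ | ∃ S : Finset (EuclideanSpace ℝ (Fin d)), S.card = m ∧
      (∀ p ∈ S, ‖p‖ = 1) ∧
        ∀ x : EuclideanSpace ℝ (Fin d), ‖x‖ = 1 → ∃ s ∈ S, dist x s ≤ δ}.Nonempty := by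
    refine ⟨_, ht.toFinset, rfl, fun p hp => by simpa using hts (ht.mem_toFinset.mp hp),
      fun x hx => ?_⟩
    obtain ⟨s, hs, hxs⟩ := Set.mem_iUnion₂.mp (hcov (mem_sphere_zero_iff_norm.mpr hx))
    exact ⟨s, ht.mem_toFinset.mpr hs, (Metric.mem_ball.mp hxs).le⟩
  exact Nat.sInf_mem hne

lemma add_sq_le_weighted {t : ℝ} (ht : 0 < t) (u v : ℝ) :
    (u + v) ^ 2 ≤ (1 + t) * u ^ 2 + (1 + t⁻¹) * v ^ 2 := by
  have key : (1 + t) * u ^ 2 + (1 + t⁻¹) * v ^ 2 - (u + v) ^ 2 = (t * u - v) ^ 2 / t := by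
    field_simp; ring
  nlinarith [div_nonneg (sq_nonneg (t * u - v)) ht.le]

lemma half_le_log_one_add {x : ℝ} (hx : 0 ≤ x) (hx2 : x ≤ 2) : x / 2 ≤ Real.log (1 + x) := by
  refine le_trans ?_ (Real.le_log_one_add_of_nonneg hx)
  rw [div_le_div_iff₀ (by norm_num) (by linarith)]
  nlinarith

lemma floor_one_div_add_floor_logb_add_two_le {β : ℝ} {n : ℕ} (hβ : 0 < β) (hβ1 : β ≤ 1)
    (hn : 2 ≤ n) :
    (⌊1 / β⌋₊ + ⌊Real.logb (1 + β / 16) √(72 * n)⌋₊ + 2 : ℝ) ≤ 150 * Real.log n / β := by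
  have hn' : (2 : ℝ) ≤ n := by exact_mod_cast hn
  have hlog2 := Real.log_two_gt_d9
  have hlogn : Real.log 2 ≤ Real.log n := Real.log_le_log (by norm_num) hn'
  have hg : β / 32 ≤ Real.log (1 + β / 16) := by
    linarith [half_le_log_one_add (x := β / 16) (by positivity) (by linarith)]
  have h72 : Real.log √(72 * n) ≤ 9 / 2 * Real.log n := by
    have h : 72 * (n : ℝ) ≤ n ^ 9 := by
      nlinarith [pow_le_pow_left₀ (by norm_num) hn' 8]
    have hlog := Real.log_le_log (by positivity) h
    rw [Real.log_pow, Nat.cast_ofNat] at hlog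
    rw [Real.log_sqrt (by positivity)]
    linarith
  have hlogb : Real.logb (1 + β / 16) √(72 * n) ≤ 144 * Real.log n / β := by
    calc Real.logb (1 + β / 16) √(72 * n) ≤ 9 / 2 * Real.log n / Real.log (1 + β / 16) :=
          div_le_div_of_nonneg_right h72 (by linarith)
      _ ≤ 9 / 2 * Real.log n / (β / 32) :=
          div_le_div_of_nonneg_left (by linarith) (by positivity) hg
      _ = 144 * Real.log n / β := by ring
  have h₁ : (⌊1 / β⌋₊ : ℝ) ≤ 1 / β := Nat.floor_le (by positivity)
  have h₂ : (⌊Real.logb (1 + β / 16) √(72 * n)⌋₊ : ℝ) ≤ 144 * Real.log n / β :=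
    (Nat.cast_le.mpr (Nat.floor_le_floor hlogb)).trans (Nat.floor_le (by positivity))
  have h₃ : 1 / β + 2 ≤ 6 * Real.log n / β := by
    rw [div_add' _ _ _ hβ.ne', div_le_div_iff_of_pos_right hβ]
    linarith
  calc (⌊1 / β⌋₊ + ⌊Real.logb (1 + β / 16) √(72 * n)⌋₊ + 2 : ℝ)
      ≤ 1 / β + 144 * Real.log n / β + 2 := by linarith
    _ ≤ 150 * Real.log n / β := by
        linarith [show 150 * Real.log n / β = 6 * Real.log n / β + 144 * Real.log n / β by ring]

/-- Radii `j * a` for `j * a ≤ b` followed by `b * g ^ j` for `b * g ^ j ≤ L`. -/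
noncomputable def radiusGrid (a b g L : ℝ) : Finset ℝ :=
  (range (⌊b / a⌋₊ + 1)).image (fun j : ℕ => j * a) ∪
    (range (⌊Real.logb g (L / b)⌋₊ + 1)).image (fun j => b * g ^ j)

lemma card_radiusGrid_le (a b g L : ℝ) :
    (radiusGrid a b g L).card ≤ ⌊b / a⌋₊ + ⌊Real.logb g (L / b)⌋₊ + 2 := by
  unfold radiusGrid
  refine (card_union_le _ _).trans ?_
  have h₁ := card_image_le (s := range (⌊b / a⌋₊ + 1)) (f := fun j : ℕ => (j : ℝ) * a)
  have h₂ := card_image_le (s := range (⌊Real.logb g (L / b)⌋₊ + 1)) (f := fun j => b * g ^ j)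
  simp only [card_range] at h₁ h₂
  omega

lemma exists_mem_radiusGrid {a b g L D : ℝ} (ha : 0 < a) (hb : 0 < b) (hg : 1 < g)
    (hD : 0 ≤ D) (hDL : D ≤ L) :
    ∃ r ∈ radiusGrid a b g L, |D - r| ≤ a + (g - 1) * D := by
  rcases le_or_gt D b with hDb | hbD
  · refine ⟨⌊D / a⌋₊ * a, mem_union_left _ (mem_image_of_mem _ (mem_range.mpr
      (Nat.lt_succ_of_le (Nat.floor_le_floor (by gcongr))))), ?_⟩
    have h₁ : ⌊D / a⌋₊ * a ≤ D := (le_div_iff₀ ha).mp (Nat.floor_le (div_nonneg hD ha.le))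
    have h₂ : D < (⌊D / a⌋₊ + 1) * a := (div_lt_iff₀ ha).mp (Nat.lt_floor_add_one _)
    rw [abs_of_nonneg (by linarith)]
    nlinarith
  · obtain ⟨j, hj₁, hj₂⟩ := exists_nat_pow_near ((one_le_div hb).mpr hbD.le) hg
    have hjL : (j : ℝ) ≤ Real.logb g (L / b) := by
      rw [Real.le_logb_iff_rpow_le hg (div_pos (by linarith) hb), Real.rpow_natCast]
      exact hj₁.trans (by gcongr)
    refine ⟨b * g ^ j, mem_union_right _ (mem_image_of_mem _ (mem_range.mpr
      (Nat.lt_succ_of_le (Nat.le_floor hjL)))), ?_⟩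
    rw [le_div_iff₀ hb, mul_comm] at hj₁
    rw [div_lt_iff₀ hb, pow_succ] at hj₂
    rw [abs_of_nonneg (by linarith)]
    nlinarith

lemma radiusGrid_nonempty (a b g L : ℝ) : (radiusGrid a b g L).Nonempty :=
  ⟨_, mem_union_left _ (mem_image_of_mem _ (mem_range.mpr (Nat.succ_pos _)))⟩

section ShiftedCenters

variable {E : Type*} [NormedAddCommGroup E] [NormedSpace ℝ E] [DecidableEq E]

def shiftedCenters (C : Finset E) (R : Finset ℝ) (S : Finset E) : Finset E :=
  (C ×ˢ R ×ˢ S).image fun q => q.1 + q.2.1 • q.2.2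

lemma add_smul_mem_shiftedCenters {C : Finset E} {R : Finset ℝ} {S : Finset E} {c s : E} {r : ℝ}
    (hc : c ∈ C) (hr : r ∈ R) (hs : s ∈ S) : c + r • s ∈ shiftedCenters C R S :=
  mem_image.mpr ⟨(c, r, s), mem_product.mpr ⟨hc, mem_product.mpr ⟨hr, hs⟩⟩, rfl⟩

lemma shiftedCenters_nonempty {C : Finset E} {R : Finset ℝ} {S : Finset E} (hC : C.Nonempty)
    (hR : R.Nonempty) (hS : S.Nonempty) : (shiftedCenters C R S).Nonempty :=
  (hC.product (hR.product hS)).image _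

lemma card_shiftedCenters_le (C : Finset E) (R : Finset ℝ) (S : Finset E) :
    (shiftedCenters C R S).card ≤ C.card * R.card * S.card :=
  card_image_le.trans_eq (by rw [card_product, card_product, mul_assoc])

end ShiftedCenters

lemma kmeansCost_shiftedCenters_le {d n : ℕ} {X : Fin n → EuclideanSpace ℝ (Fin d)}
    {C S : Finset (EuclideanSpace ℝ (Fin d))} {a b g δ : ℝ} (hC : C.Nonempty) (hS : S.Nonempty)
    (hSunit : ∀ s ∈ S, ‖s‖ = 1)
    (hcov : ∀ u : EuclideanSpace ℝ (Fin d), ‖u‖ = 1 → ∃ s ∈ S, dist u s ≤ δ)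
    (ha : 0 < a) (hb : 0 < b) (hg : 1 < g) :
    kmeansCost (shiftedCenters C (radiusGrid a b g √(kmeansCost C X)) S) X ≤
      11 / 10 * (δ + (g - 1)) ^ 2 * kmeansCost C X + 11 * n * a ^ 2 := by
  set f : Fin n → ℝ := fun i => 11 / 10 * (δ + (g - 1)) ^ 2 *
    C.inf' hC (fun c => dist (X i) c ^ 2) + 11 * a ^ 2
  have hsum : ∑ i, f i = 11 / 10 * (δ + (g - 1)) ^ 2 * kmeansCost C X + 11 * n * a ^ 2 := by
    simp only [f, sum_add_distrib, ← mul_sum, ← kmeansCost_eq_sum_inf' hC, sum_const, card_univ,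
      Fintype.card_fin, nsmul_eq_mul]
    ring
  rw [← hsum]
  refine kmeansCost_le_sum (shiftedCenters_nonempty hC (radiusGrid_nonempty _ _ _ _) hS) fun i => ?_
  obtain ⟨c, hc, hci⟩ := exists_mem_eq_inf' hC fun c => dist (X i) c ^ 2
  have hDP : ‖X i - c‖ ≤ √(kmeansCost C X) := by
    rw [← dist_eq_norm]
    refine Real.le_sqrt_of_sq_le ?_
    rw [← hci, kmeansCost_eq_sum_inf' hC]
    exact single_le_sum (f := fun i => C.inf' hC fun c => dist (X i) c ^ 2)
      (fun j _ => le_inf' hC _ fun _ _ => by positivity) (mem_univ i)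
  obtain ⟨r, hr, hrD⟩ := exists_mem_radiusGrid ha hb hg (norm_nonneg _) hDP
  obtain ⟨s, hs, hsD⟩ := exists_mem_norm_sub_norm_smul_le hS hcov (X i - c)
  refine ⟨c + r • s, add_smul_mem_shiftedCenters hc hr hs, ?_⟩
  have hdist : dist (X i) (c + r • s) ≤ (δ + (g - 1)) * ‖X i - c‖ + a := by
    linarith [dist_add_smul_le (hSunit s hs) (X i) c r]
  calc dist (X i) (c + r • s) ^ 2 ≤ ((δ + (g - 1)) * ‖X i - c‖ + a) ^ 2 :=
        pow_le_pow_left₀ dist_nonneg hdist 2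
    _ ≤ 11 / 10 * ((δ + (g - 1)) * ‖X i - c‖) ^ 2 + 11 * a ^ 2 :=
        (add_sq_le_weighted (t := 1 / 10) (by norm_num) _ _).trans_eq (by norm_num)
    _ = f i := by simp only [f, hci]; rw [dist_eq_norm]; ring

lemma exists_centers_kmeansCost_le {d n : ℕ} {X : Fin n → EuclideanSpace ℝ (Fin d)}
    {C S : Finset (EuclideanSpace ℝ (Fin d))} {ε : ℝ} (hε : 0 < ε) (hε1 : ε ≤ 1) (hn : 2 ≤ n)
    (hC : C.Nonempty) (hP : 0 < kmeansCost C X) (hS : S.Nonempty) (hSunit : ∀ s ∈ S, ‖s‖ = 1)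
    (hcov : ∀ u : EuclideanSpace ℝ (Fin d), ‖u‖ = 1 → ∃ s ∈ S, dist u s ≤ √(ε / 2)) :
    ∃ ξ : Finset (EuclideanSpace ℝ (Fin d)), ξ.Nonempty ∧
      (ξ.card : ℝ) ≤ 150 * S.card * C.card * Real.log n / √ε ∧
      kmeansCost ξ X ≤ 8 / 9 * ε * kmeansCost C X := by
  classical
  set P := kmeansCost C X
  set β := √ε
  have hβ : 0 < β := Real.sqrt_pos.mpr hε
  have hn' : (0 : ℝ) < n := by positivity
  set b := √(P / (72 * n))
  have hb : 0 < b := Real.sqrt_pos.mpr (by positivity)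
  have hba : b / (β * b) = 1 / β := by field_simp
  have hLb : √P / b = √(72 * n) := by
    rw [← Real.sqrt_div hP.le]
    congr 1
    field_simp
  refine ⟨shiftedCenters C (radiusGrid (β * b) b (1 + β / 16) √P) S,
    shiftedCenters_nonempty hC (radiusGrid_nonempty _ _ _ _) hS, ?_, ?_⟩
  · have hgrid := card_radiusGrid_le (β * b) b (1 + β / 16) √P
    rw [hba, hLb] at hgrid
    have hcount := floor_one_div_add_floor_logb_add_two_le hβ (Real.sqrt_le_one.mpr hε1) hn
    calc ((shiftedCenters C (radiusGrid (β * b) b (1 + β / 16) √P) S).card : ℝ)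
        ≤ C.card * (radiusGrid (β * b) b (1 + β / 16) √P).card * S.card := by
          exact_mod_cast card_shiftedCenters_le C _ S
      _ ≤ C.card * (150 * Real.log n / β) * S.card := by
          gcongr
          exact (Nat.cast_le.mpr hgrid).trans (by push_cast; exact hcount)
      _ = 150 * S.card * C.card * Real.log n / β := by ring
  · refine (kmeansCost_shiftedCenters_le hC hS hSunit hcov (by positivity) hb
      (by linarith)).trans ?_
    have hδγ : (√(ε / 2) + (1 + β / 16 - 1)) ^ 2 ≤ 3 / 5 * ε := by
      have := add_sq_le_weighted (t := 1 / 10) (by norm_num) √(ε / 2) (β / 16)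
      rw [Real.sq_sqrt (by positivity), div_pow, Real.sq_sqrt hε.le] at this
      linarith
    have ha : (n : ℝ) * (β * b) ^ 2 = ε * P / 72 := by
      rw [mul_pow, Real.sq_sqrt hε.le, Real.sq_sqrt (by positivity)]
      field_simp
    nlinarith [kmeansCost_nonneg (C := C) (X := X)]

lemma natCast_le_mul_log_div_sqrt (k : ℕ) {N n : ℕ} {ε : ℝ} (hN : 0 < N) (hε : 0 < ε)
    (hε1 : ε ≤ 1) (hn : 2 ≤ n) : (k : ℝ) ≤ 150 * N * k * Real.log n / √ε := by
  have hN' : (1 : ℝ) ≤ N := by exact_mod_cast hN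
  have hlog : (1 : ℝ) ≤ 150 * Real.log n := by
    linarith [Real.log_two_gt_d9,
      Real.log_le_log (by norm_num) (show (2 : ℝ) ≤ n by exact_mod_cast hn)]
  rw [le_div_iff₀ (Real.sqrt_pos.mpr hε)]
  calc (k : ℝ) * √ε ≤ k * (N * (150 * Real.log n)) := by
        gcongr
        exact (Real.sqrt_le_one.mpr hε1).trans (one_le_mul_of_one_le_of_one_le hN' hlog)
    _ = 150 * N * k * Real.log n := by ring

/-- upper bound for Euclidean k-means. There is a universal
constant `c > 0` such that for every `d ≥ 2`, `0 < ε ≤ 1`, `k ≥ 1` and every family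
`X` of `n ≥ 2` points in `ℝ^d`, there is a finite set `ξ ⊆ ℝ^d` with
`|ξ| ≤ c · N(S^{d-1}, √(ε/2)) · k · log n / √ε` and `Φ(ξ, X) ≤ ε · Δ_k(X)`. -/
theorem kmeans_upper_bound :
    ∃ c : ℝ, 0 < c ∧
      ∀ d : ℕ, 2 ≤ d →
      ∀ ε : ℝ, 0 < ε → ε ≤ 1 →
      ∀ k : ℕ, 1 ≤ k →
      ∀ n : ℕ, 2 ≤ n →
      ∀ X : Fin n → EuclideanSpace ℝ (Fin d),
        ∃ ξ : Finset (EuclideanSpace ℝ (Fin d)), ξ.Nonempty ∧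
          (ξ.card : ℝ) ≤
            c * (coveringNumber d (Real.sqrt (ε / 2)) : ℝ) * k * Real.log n / Real.sqrt ε ∧
          kmeansCost ξ X ≤ ε * kmeansOpt k X := by
  classical
  refine ⟨150, by norm_num, fun d hd ε hε hε1 k hk n hn X => ?_⟩
  obtain ⟨S, hScard, hSunit, hcov⟩ := exists_sphere_net d (Real.sqrt_pos.mpr (half_pos hε))
  have hS : S.Nonempty := by
    obtain ⟨s, hs, -⟩ := hcov (EuclideanSpace.single ⟨0, by omega⟩ 1) (by simp)
    exact ⟨s, hs⟩
  rw [← hScard]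
  by_cases hX : (univ.image X).card ≤ k
  · have : Nonempty (Fin n) := ⟨⟨0, by omega⟩⟩
    refine ⟨univ.image X, univ_nonempty.image X, (Nat.cast_le.mpr hX).trans
      (natCast_le_mul_log_div_sqrt k hS.card_pos hε hε1 hn), ?_⟩
    rw [kmeansCost_image_self]
    exact mul_nonneg hε.le (kmeansOpt_nonneg k)
  · rw [not_le] at hX
    have hΔ := kmeansOpt_pos hk hX
    obtain ⟨C₀, -, hC₀⟩ := exists_subset_card_eq hX.le
    obtain ⟨C, hCk, hCP⟩ := exists_kmeansCost_lt_of_kmeansOpt_lt ⟨C₀, hC₀⟩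
      (show kmeansOpt k X < 9 / 8 * kmeansOpt k X by linarith)
    obtain ⟨ξ, hξ, hcard, hcost⟩ := exists_centers_kmeansCost_le hε hε1 hn
      (card_pos.mp (hCk ▸ hk)) (hΔ.trans_le (kmeansOpt_le_kmeansCost hCk)) hS hSunit hcov
    refine ⟨ξ, hξ, by rwa [hCk] at hcard, hcost.trans ?_⟩
    nlinarith
end

section
/- There is a universal constant c > 0 such that the following holds. Let d ≥ 2 and let N(S^{d-1}, δ) denote the covering number of the unit sphere in ℝ^d at scale δ. For every ε with 0 < ε ≤ 1, every integer k ≥ 1, and every finite family X of n ≥ 2 points in ℝ^d, there exists a finite set ξ ⊆ ℝ^d with |ξ| ≤ c · N(S^{d-1}, ε/2) · k · (log n)/ε such that the k-median cost satisfies Φ(ξ, X) ≤ ε · Δ_k(X). -/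
/-- Euclidean k-median cost of a family `X : Fin n → ℝ^d` with respect to a finite
(nonempty) center set `C ⊆ ℝ^d`: `Φ(C, X) = Σ_i min_{c ∈ C} ‖X i − c‖`. -/
noncomputable def kmedianCost {d n : ℕ} (C : Finset (EuclideanSpace ℝ (Fin d)))
    (X : Fin n → EuclideanSpace ℝ (Fin d)) : ℝ :=
  ∑ i, sInf ((fun c => dist (X i) c) '' (C : Set (EuclideanSpace ℝ (Fin d))))

/-- Optimal k-median cost `Δ_k(X)`: infimum of `Φ(C, X)` over sets `C ⊆ ℝ^d`
with `|C| = k`. -/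
noncomputable def kmedianOpt {d n : ℕ} (k : ℕ) (X : Fin n → EuclideanSpace ℝ (Fin d)) : ℝ :=
  sInf {r : ℝ | ∃ C : Finset (EuclideanSpace ℝ (Fin d)), C.card = k ∧ kmedianCost C X = r}

/-!
Fix a `k`-center set `C` of cost `A < 4/3 · Δ_k(X)` and an `ε/2`-net `S` of the unit sphere.
Around every center place the points `c + r • s`, with `s ∈ S` and `r` running over
`O(log n / ε)` radii: an arithmetic progression of step `ε t / 8` up to `t = A / n`, then a
geometric progression of ratio `1 + ε / 8` up to `A`. A point at distance `D` from its center
lies within `(D - r) + r ε / 2 ≤ ε (t / 8 + 5 D / 8)` of one of them, and summing over the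
points gives a cost of at most `3 ε A / 4 ≤ ε Δ_k(X)`. This needs `Δ_k(X) > 0`, which holds
unless `X` takes at most `k` values, and then the values themselves cost nothing.
-/

open Finset Real

theorem exists_le_floor_div_mul_near {δ s M : ℝ} (hδ : 0 < δ) (hs : 0 ≤ s) (hsM : s ≤ M) :
    ∃ j ≤ ⌊M / δ⌋₊, (j : ℝ) * δ ≤ s ∧ s - j * δ < δ := by
  refine ⟨⌊s / δ⌋₊, Nat.floor_le_floor (div_le_div_of_nonneg_right hsM hδ.le), ?_, ?_⟩
  · exact (le_div_iff₀ hδ).1 (Nat.floor_le (div_nonneg hs hδ.le))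
  · have := (div_lt_iff₀ hδ).1 (Nat.lt_floor_add_one (s / δ))
    linarith

theorem exists_le_floor_log_div_log_pow_near {b x M : ℝ} (hb : 1 < b) (hx : 1 ≤ x)
    (hxM : x ≤ M) : ∃ j ≤ ⌊log M / log b⌋₊, b ^ j ≤ x ∧ x < b ^ (j + 1) := by
  obtain ⟨j, hjx, hxj⟩ := exists_nat_pow_near hx hb
  refine ⟨j, Nat.le_floor ?_, hjx, hxj⟩
  rw [le_div_iff₀ (log_pos hb), ← log_pow]
  exact log_le_log (by positivity) (hjx.trans hxM)

theorem one_le_two_mul_log {M : ℝ} (hM : 2 ≤ M) : 1 ≤ 2 * log M := by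
  have := log_le_log (by norm_num) hM
  linarith [log_two_gt_d9]

theorem div_nine_le_log_one_add_div_eight {ε : ℝ} (hε : 0 ≤ ε) (hε1 : ε ≤ 1) :
    ε / 9 ≤ log (1 + ε / 8) := by
  refine le_trans ?_ (le_log_one_add_of_nonneg (by positivity))
  rw [div_le_div_iff₀ (by norm_num) (by positivity)]
  nlinarith

noncomputable def radii (ε t M : ℝ) : Finset ℝ :=
  (range (⌊8 / ε⌋₊ + 1)).image (fun j : ℕ => j * (ε * t / 8)) ∪
    (range (⌊log M / log (1 + ε / 8)⌋₊ + 1)).image (fun j : ℕ => t * (1 + ε / 8) ^ j)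

theorem card_radii_le {ε M : ℝ} (hε : 0 < ε) (hε1 : ε ≤ 1) (hM : 2 ≤ M) (t : ℝ) :
    (#(radii ε t M) : ℝ) ≤ 29 * log M / ε := by
  set J₀ := ⌊8 / ε⌋₊
  set J₁ := ⌊log M / log (1 + ε / 8)⌋₊
  have hcard : (#(radii ε t M) : ℝ) ≤ J₀ + 1 + (J₁ + 1) := by
    have : #(radii ε t M) ≤ #(range (J₀ + 1)) + #(range (J₁ + 1)) :=
      (card_union_le _ _).trans (add_le_add card_image_le card_image_le)
    rw [card_range, card_range] at this
    exact_mod_cast this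
  have hJ₀ : (J₀ : ℝ) * ε ≤ 8 := (le_div_iff₀ hε).1 (Nat.floor_le (by positivity))
  have hJ₁ : (J₁ : ℝ) * ε ≤ 9 * log M := by
    have hb : 0 < log (1 + ε / 8) := log_pos (by linarith)
    have hJ : (J₁ : ℝ) * log (1 + ε / 8) ≤ log M :=
      (le_div_iff₀ hb).1 (Nat.floor_le (div_nonneg (log_nonneg (by linarith)) hb.le))
    nlinarith [div_nine_le_log_one_add_div_eight hε.le hε1, Nat.cast_nonneg (α := ℝ) J₁]
  have hL := one_le_two_mul_log hM
  rw [le_div_iff₀ hε]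
  nlinarith

theorem exists_mem_radii_near {ε t M s : ℝ} (hε : 0 < ε) (ht : 0 < t) (hs : 0 ≤ s)
    (hsM : s ≤ M * t) : ∃ r ∈ radii ε t M, 0 ≤ r ∧ r ≤ s ∧ s - r ≤ ε / 8 * (t + s) := by
  rcases le_or_gt s t with hst | hts
  · have hδ : 0 < ε * t / 8 := by positivity
    obtain ⟨j, hj, hjs, hsj⟩ := exists_le_floor_div_mul_near hδ hs hst
    rw [show t / (ε * t / 8) = 8 / ε by field_simp] at hj
    refine ⟨j * (ε * t / 8), mem_union_left _ (mem_image_of_mem _ (mem_range.2 (by omega))),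
      by positivity, hjs, ?_⟩
    nlinarith [mul_nonneg (by positivity : 0 ≤ ε / 8) hs]
  · obtain ⟨j, hj, hjs, hsj⟩ := exists_le_floor_log_div_log_pow_near
      (by linarith : 1 < 1 + ε / 8) ((one_le_div ht).2 hts.le) ((div_le_iff₀ ht).2 hsM)
    rw [le_div_iff₀ ht] at hjs
    rw [div_lt_iff₀ ht, pow_succ] at hsj
    refine ⟨t * (1 + ε / 8) ^ j,
      mem_union_right _ (mem_image_of_mem _ (mem_range.2 (by omega))), by positivity,
      by linarith, ?_⟩
    have := mul_le_mul_of_nonneg_left hjs (by positivity : 0 ≤ ε / 8)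
    nlinarith [mul_pos (by positivity : 0 < ε / 8) ht]

section Shells

open Metric

variable {E : Type*} [NormedAddCommGroup E] [NormedSpace ℝ E]

/-- `s` is taken `δ`-close to the unit vector from `c` towards `x`. -/
theorem exists_dist_add_smul_le {S : Finset E} (hS : S.Nonempty) {δ : ℝ}
    (hnet : ∀ u : E, ‖u‖ = 1 → ∃ s ∈ S, dist u s ≤ δ) (x c : E) {r : ℝ} (hr₀ : 0 ≤ r)
    (hr : r ≤ dist x c) : ∃ s ∈ S, dist x (c + r • s) ≤ dist x c - r + r * δ := by
  rcases eq_or_ne x c with rfl | hxc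
  · obtain ⟨s, hs⟩ := hS
    obtain rfl : r = 0 := le_antisymm (by simpa using hr) hr₀
    exact ⟨s, hs, by simp⟩
  set D := dist x c
  have hD : 0 < D := dist_pos.2 hxc
  set u := D⁻¹ • (x - c)
  have hu : ‖u‖ = 1 := by
    rw [norm_smul, norm_inv, norm_of_nonneg hD.le, ← dist_eq_norm, inv_mul_cancel₀ hD.ne']
  have hxc' : x - c = D • u := by rw [smul_inv_smul₀ hD.ne']
  obtain ⟨s, hs, hus⟩ := hnet u hu
  refine ⟨s, hs, ?_⟩
  calc dist x (c + r • s) = ‖(D - r) • u + r • (u - s)‖ := by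
        rw [dist_eq_norm, sub_smul, smul_sub, ← hxc']
        congr 1
        abel
    _ ≤ ‖(D - r) • u‖ + ‖r • (u - s)‖ := norm_add_le _ _
    _ = D - r + r * dist u s := by
        rw [norm_smul (D - r) u, norm_smul r, hu, norm_of_nonneg (sub_nonneg.2 hr),
          norm_of_nonneg hr₀, dist_eq_norm, mul_one]
    _ ≤ D - r + r * δ := by gcongr

variable [DecidableEq E]

noncomputable def shellPoints (C : Finset E) (R : Finset ℝ) (S : Finset E) : Finset E :=
  (C ×ˢ R ×ˢ S).image fun p => p.1 + p.2.1 • p.2.2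

theorem card_shellPoints_le (C : Finset E) (R : Finset ℝ) (S : Finset E) :
    #(shellPoints C R S) ≤ #C * #R * #S :=
  card_image_le.trans (by rw [card_product, card_product, mul_assoc])

theorem infDist_shellPoints_radii_le {S : Finset E} (hS : S.Nonempty) {ε : ℝ} (hε : 0 < ε)
    (hnet : ∀ u : E, ‖u‖ = 1 → ∃ s ∈ S, dist u s ≤ ε / 2) {C : Finset E} (hC : C.Nonempty)
    {t M : ℝ} (ht : 0 < t) {x : E} (hx : infDist x C ≤ M * t) :
    infDist x (shellPoints C (radii ε t M) S) ≤ ε * (t / 8 + 5 / 8 * infDist x C) := by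
  obtain ⟨c, hc, hxc⟩ := C.finite_toSet.isCompact.exists_infDist_eq_dist hC x
  rw [hxc] at hx ⊢
  obtain ⟨r, hr, hr₀, hrx, hxr⟩ := exists_mem_radii_near hε ht dist_nonneg hx
  obtain ⟨s, hs, hxs⟩ := exists_dist_add_smul_le hS hnet x c hr₀ hrx
  have hmem : c + r • s ∈ shellPoints C (radii ε t M) S :=
    mem_image.2 ⟨(c, r, s), mem_product.2 ⟨hc, mem_product.2 ⟨hr, hs⟩⟩, rfl⟩
  have := mul_le_mul_of_nonneg_right hrx (by positivity : 0 ≤ ε / 2)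
  calc infDist x (shellPoints C (radii ε t M) S) ≤ dist x (c + r • s) :=
        infDist_le_dist_of_mem hmem
    _ ≤ dist x c - r + r * (ε / 2) := hxs
    _ ≤ ε * (t / 8 + 5 / 8 * dist x c) := by linarith

/-- The radii are scaled by `t = A / n`, so that the additive error `n t / 8` is `A / 8`. -/
theorem exists_sum_infDist_le {n : ℕ} (hn : 2 ≤ n) {ε : ℝ} (hε : 0 < ε) (hε1 : ε ≤ 1)
    {S : Finset E} (hS : S.Nonempty) (hnet : ∀ u : E, ‖u‖ = 1 → ∃ s ∈ S, dist u s ≤ ε / 2)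
    {C : Finset E} (hC : C.Nonempty) (X : Fin n → E) (hA : 0 < ∑ i, infDist (X i) C) :
    ∃ ξ : Finset E, ξ.Nonempty ∧ (#ξ : ℝ) ≤ 29 * #S * #C * log n / ε ∧
      ∑ i, infDist (X i) ξ ≤ 3 / 4 * ε * ∑ i, infDist (X i) C := by
  set A := ∑ i, infDist (X i) C
  have hn' : (2 : ℝ) ≤ n := by exact_mod_cast hn
  set t := A / n
  have hnt : n * t = A := mul_div_cancel₀ _ (by positivity)
  have ht : 0 < t := by positivity
  set R := radii ε t n
  have hRne : R.Nonempty :=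
    let ⟨r, hr, _⟩ := exists_mem_radii_near hε ht le_rfl (by positivity); ⟨r, hr⟩
  refine ⟨shellPoints C R S, (hC.product (hRne.product hS)).image _, ?_, ?_⟩
  · calc (#(shellPoints C R S) : ℝ) ≤ #C * #R * #S := by
          exact_mod_cast card_shellPoints_le C R S
      _ ≤ #C * (29 * log n / ε) * #S := by gcongr; exact card_radii_le hε hε1 hn' t
      _ = 29 * #S * #C * log n / ε := by ring
  · have hX : ∀ i, infDist (X i) C ≤ n * t := fun i =>
      hnt ▸ single_le_sum (fun j _ => infDist_nonneg) (mem_univ i)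
    calc ∑ i, infDist (X i) (shellPoints C R S)
        ≤ ∑ i, ε * (t / 8 + 5 / 8 * infDist (X i) C) :=
          sum_le_sum fun i _ => infDist_shellPoints_radii_le hS hε hnet hC ht (hX i)
      _ = ε * (n * t / 8 + 5 / 8 * A) := by
          rw [← mul_sum, sum_add_distrib, ← mul_sum, sum_const, card_univ, Fintype.card_fin,
            nsmul_eq_mul]
          ring
      _ = 3 / 4 * ε * A := by rw [hnt]; ring

end Shells

section KMedian

open Metric

theorem exists_ne_dist_le_infDist_add_infDist {α : Type*} [PseudoMetricSpace α] {C V : Finset α}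
    (hC : C.Nonempty) (hCV : #C < #V) :
    ∃ v ∈ V, ∃ w ∈ V, v ≠ w ∧ dist v w ≤ infDist v C + infDist w C := by
  choose f hfC hf using fun v => C.finite_toSet.isCompact.exists_infDist_eq_dist hC v
  obtain ⟨v, hv, w, hw, hvw, hfvw⟩ :=
    exists_ne_map_eq_of_card_lt_of_maps_to hCV fun v _ => hfC v
  refine ⟨v, hv, w, hw, hvw, ?_⟩
  rw [hf v, hf w, hfvw, dist_comm w]
  exact dist_triangle _ _ _

variable {d n : ℕ}

theorem kmedianCost_eq_sum_infDist (C : Finset (EuclideanSpace ℝ (Fin d)))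
    (X : Fin n → EuclideanSpace ℝ (Fin d)) : kmedianCost C X = ∑ i, infDist (X i) C := by
  simp only [kmedianCost, sInf_image', infDist_eq_iInf]

theorem kmedianCost_nonneg (C : Finset (EuclideanSpace ℝ (Fin d)))
    (X : Fin n → EuclideanSpace ℝ (Fin d)) : 0 ≤ kmedianCost C X :=
  kmedianCost_eq_sum_infDist C X ▸ sum_nonneg fun _ _ => infDist_nonneg

theorem kmedianCost_image_self [DecidableEq (EuclideanSpace ℝ (Fin d))]
    (X : Fin n → EuclideanSpace ℝ (Fin d)) : kmedianCost (univ.image X) X = 0 := by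
  rw [kmedianCost_eq_sum_infDist]
  exact sum_eq_zero fun i _ => infDist_zero_of_mem (by simp)

theorem kmedianOpt_nonneg (k : ℕ) (X : Fin n → EuclideanSpace ℝ (Fin d)) :
    0 ≤ kmedianOpt k X :=
  Real.sInf_nonneg (by rintro _ ⟨C, -, rfl⟩; exact kmedianCost_nonneg C X)

theorem kmedianOpt_le_kmedianCost {k : ℕ} {C : Finset (EuclideanSpace ℝ (Fin d))} (hC : #C = k)
    (X : Fin n → EuclideanSpace ℝ (Fin d)) : kmedianOpt k X ≤ kmedianCost C X :=
  csInf_le ⟨0, by rintro _ ⟨C', -, rfl⟩; exact kmedianCost_nonneg C' X⟩ ⟨C, hC, rfl⟩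

theorem EuclideanSpace.exists_finset_card_eq (hd : 0 < d) (k : ℕ) :
    ∃ C : Finset (EuclideanSpace ℝ (Fin d)), #C = k :=
  have : Nonempty (Fin d) := ⟨⟨0, hd⟩⟩
  have := Module.Free.infinite ℝ (EuclideanSpace ℝ (Fin d))
  Infinite.exists_subset_card_eq _ k

theorem exists_kmedianCost_lt (hd : 0 < d) {k : ℕ} {X : Fin n → EuclideanSpace ℝ (Fin d)}
    {a : ℝ} (h : kmedianOpt k X < a) :
    ∃ C : Finset (EuclideanSpace ℝ (Fin d)), #C = k ∧ kmedianCost C X < a := by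
  obtain ⟨C, hC⟩ := EuclideanSpace.exists_finset_card_eq hd k
  rw [kmedianOpt] at h
  have key := fun hne => exists_lt_of_csInf_lt hne h
  obtain ⟨_, ⟨C, hCk, rfl⟩, hCa⟩ := key ⟨_, C, hC, rfl⟩
  exact ⟨C, hCk, hCa⟩

/-- With more than `k` distinct points, some center serves two of them, so every `k`-center
set costs at least half the smallest distance between distinct points. -/
theorem kmedianOpt_pos [DecidableEq (EuclideanSpace ℝ (Fin d))] (hd : 0 < d) {k : ℕ}
    (hk : 1 ≤ k) {X : Fin n → EuclideanSpace ℝ (Fin d)} (hX : k < #(univ.image X)) :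
    0 < kmedianOpt k X := by
  set V := univ.image X
  have hV : V.offDiag.Nonempty := by
    obtain ⟨v, hv, w, hw, hvw⟩ := one_lt_card.1 (hk.trans_lt hX)
    exact ⟨(v, w), mem_offDiag.2 ⟨hv, hw, hvw⟩⟩
  obtain ⟨m, hm, hmV⟩ : ∃ m > 0, ∀ p ∈ V.offDiag, m ≤ dist p.1 p.2 :=
    ⟨_, (lt_inf'_iff hV).2 fun p hp => dist_pos.2 (mem_offDiag.1 hp).2.2, fun p => inf'_le _⟩
  obtain ⟨C₀, hC₀⟩ := EuclideanSpace.exists_finset_card_eq hd k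
  rw [kmedianOpt]
  refine (half_pos hm).trans_le (le_csInf ⟨_, C₀, hC₀, rfl⟩ ?_)
  rintro _ ⟨C, hCk, rfl⟩
  obtain ⟨v, hv, w, hw, hvw, hdist⟩ :=
    exists_ne_dist_le_infDist_add_infDist (card_pos.1 (hCk ▸ hk)) (hCk ▸ hX)
  obtain ⟨i, -, rfl⟩ := mem_image.1 hv
  obtain ⟨j, -, rfl⟩ := mem_image.1 hw
  have hmij := hmV (X i, X j) (mem_offDiag.2 ⟨hv, hw, hvw⟩)
  have hcost : ∀ l, infDist (X l) C ≤ kmedianCost C X := fun l =>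
    kmedianCost_eq_sum_infDist C X ▸ single_le_sum (fun _ _ => infDist_nonneg) (mem_univ l)
  linarith [hcost i, hcost j]

end KMedian

theorem exists_card_eq_coveringNumber {d : ℕ} {δ : ℝ} (hδ : 0 < δ) :
    ∃ S : Finset (EuclideanSpace ℝ (Fin d)), #S = coveringNumber d δ ∧ (∀ p ∈ S, ‖p‖ = 1) ∧
      ∀ x : EuclideanSpace ℝ (Fin d), ‖x‖ = 1 → ∃ s ∈ S, dist x s ≤ δ := by
  obtain ⟨T, hT, hTfin, hcover⟩ :=
    (isCompact_sphere (0 : EuclideanSpace ℝ (Fin d)) 1).finite_cover_balls hδ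
  refine Nat.sInf_mem (s := {m | ∃ S : Finset (EuclideanSpace ℝ (Fin d)), #S = m ∧
    (∀ p ∈ S, ‖p‖ = 1) ∧ ∀ x : EuclideanSpace ℝ (Fin d), ‖x‖ = 1 → ∃ s ∈ S, dist x s ≤ δ})
    ⟨_, hTfin.toFinset, rfl, fun p hp => ?_, fun x hx => ?_⟩
  · simpa using hT (hTfin.mem_toFinset.1 hp)
  · obtain ⟨s, hs, hxs⟩ := Set.mem_iUnion₂.1 (hcover (by simpa using hx))
    exact ⟨s, hTfin.mem_toFinset.2 hs, (Metric.mem_ball.1 hxs).le⟩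

/-- upper bound for Euclidean k-median. There is a universal
constant `c > 0` such that for every `d ≥ 2`, `0 < ε ≤ 1`, `k ≥ 1` and every family
`X` of `n ≥ 2` points in `ℝ^d`, there is a finite set `ξ ⊆ ℝ^d` with
`|ξ| ≤ c · N(S^{d-1}, ε/2) · k · log n / ε` and `Φ(ξ, X) ≤ ε · Δ_k(X)`. -/
theorem kmedian_upper_bound :
    ∃ c : ℝ, 0 < c ∧
      ∀ d : ℕ, 2 ≤ d →
      ∀ ε : ℝ, 0 < ε → ε ≤ 1 →
      ∀ k : ℕ, 1 ≤ k →
      ∀ n : ℕ, 2 ≤ n →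
      ∀ X : Fin n → EuclideanSpace ℝ (Fin d),
        ∃ ξ : Finset (EuclideanSpace ℝ (Fin d)), ξ.Nonempty ∧
          (ξ.card : ℝ) ≤ c * (coveringNumber d (ε / 2) : ℝ) * k * Real.log n / ε ∧
          kmedianCost ξ X ≤ ε * kmedianOpt k X := by
  classical
  refine ⟨29, by norm_num, fun d hd ε hε hε1 k hk n hn X => ?_⟩
  have hd₀ : 0 < d := by omega
  have : Nonempty (Fin d) := ⟨⟨0, hd₀⟩⟩
  obtain ⟨S, hSN, -, hnet⟩ := exists_card_eq_coveringNumber (d := d) (half_pos hε)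
  have hS : S.Nonempty :=
    let ⟨u, hu⟩ := exists_norm_eq (EuclideanSpace ℝ (Fin d)) zero_le_one
    let ⟨s, hs, _⟩ := hnet u hu
    ⟨s, hs⟩
  rw [← hSN]
  rcases le_or_gt #(univ.image X) k with hfew | hmany
  · refine ⟨univ.image X, univ_nonempty_iff.2 ⟨⟨0, by omega⟩⟩ |>.image X, ?_, ?_⟩
    · have hS₁ : (1 : ℝ) ≤ #S := by exact_mod_cast card_pos.2 hS
      have hL := one_le_two_mul_log (M := n) (by exact_mod_cast hn)
      have hX : (#(univ.image X) : ℝ) ≤ k := by exact_mod_cast hfew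
      have hkSL : 0 ≤ k * #S * log n := by positivity
      rw [le_div_iff₀ hε]
      calc (#(univ.image X) : ℝ) * ε ≤ k * 1 := mul_le_mul hX hε1 hε.le (by positivity)
        _ ≤ k * (#S * (2 * log n)) := by gcongr; exact one_le_mul_of_one_le_of_one_le hS₁ hL
        _ ≤ 29 * #S * k * log n := by linarith
    · rw [kmedianCost_image_self]
      exact mul_nonneg hε.le (kmedianOpt_nonneg k X)
  · have hΔ := kmedianOpt_pos hd₀ hk hmany
    obtain ⟨C, hCk, hCA⟩ :=
      exists_kmedianCost_lt hd₀ (show kmedianOpt k X < 4 / 3 * kmedianOpt k X by linarith)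
    have hΔA := kmedianOpt_le_kmedianCost hCk X
    rw [kmedianCost_eq_sum_infDist] at hCA hΔA
    obtain ⟨ξ, hξ, hcard, hcost⟩ :=
      exists_sum_infDist_le hn hε hε1 hS hnet (card_pos.1 (hCk ▸ hk)) X (by linarith)
    refine ⟨ξ, hξ, hCk ▸ hcard, ?_⟩
    rw [kmedianCost_eq_sum_infDist]
    linarith [mul_lt_mul_of_pos_left hCA hε]
end

section
/- There is a universal constant c > 0 such that the following holds. Let (𝒳, D) be a metric space of doubling dimension at most d. For every ε with 0 < ε ≤ 1, every integer k ≥ 1, and every finite family X of n ≥ 2 points in 𝒳, there exists a finite set ξ ⊆ 𝒳 with |ξ| ≤ c · k · (log n) · (8/ε)^d such that Φ(ξ, X) ≤ ε · Δ_k(X). -/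
/-- A metric space `𝒳` has doubling dimension at most `d` if every subset
`X ⊆ 𝒳` can be covered by at most `2^d` subsets, each of diameter at most
`dia(X)/2` (diameters taken in `ℝ≥0∞` to handle unbounded sets). -/
def DoublingDimLE (𝒳 : Type*) [MetricSpace 𝒳] (d : ℕ) : Prop :=
  ∀ X : Set 𝒳, ∃ 𝒞 : Finset (Set 𝒳), 𝒞.card ≤ 2 ^ d ∧
    X ⊆ ⋃₀ (𝒞 : Set (Set 𝒳)) ∧
    ∀ Y ∈ 𝒞, EMetric.diam Y ≤ EMetric.diam X / 2

/-- Metric k-median cost of a family `X : Fin n → 𝒳` with respect to a finite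
(nonempty) center set `C ⊆ 𝒳`: `Φ(C, X) = Σ_i min_{c ∈ C} D(X i, c)`. -/
noncomputable def medCost {𝒳 : Type*} [MetricSpace 𝒳] {n : ℕ}
    (C : Finset 𝒳) (X : Fin n → 𝒳) : ℝ :=
  ∑ i, sInf ((fun c => dist (X i) c) '' (C : Set 𝒳))

/-- Optimal metric k-median cost `Δ_k(X)`: infimum of `Φ(C, X)` over sets
`C ⊆ 𝒳` with `|C| = k`. -/
noncomputable def medOpt {𝒳 : Type*} [MetricSpace 𝒳] {n : ℕ}
    (k : ℕ) (X : Fin n → 𝒳) : ℝ :=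
  sInf {r : ℝ | ∃ C : Finset 𝒳, C.card = k ∧ medCost C X = r}

/-!
Fix `k` centres `C` whose cost `Φ` is within a factor `20 / 19` of `Δ_k(X)` (if `X` takes at most
`k` values these values cost nothing; otherwise `Δ_k(X) > 0` and such `C` exists). Sort the points
by their nearest centre and by rings: with `θ = 7 / 5` and `ρ = Φ / n²`, a point at distance `r`
from its centre lies in a ball of radius `θ ^ j * ρ ≤ ρ + θ r` around it, and `j ≤ 7 ⌈log n⌉`
suffices since `θ ^ 7 ≥ e²`. Halving diameters `t` times with `4 / ε < 2 ^ t ≤ 8 / ε` covers each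
ring by `2 ^ (d t) ≤ (8 / ε) ^ d` pieces, and a point of each piece is within `(ε / 2) (ρ + θ r)`
of every point of that piece, for a total of at most `(ε / 2) (Φ / n + θ Φ) ≤ (19 / 20) ε Φ < ε Δ_k(X)`.
-/

open Finset

section Doubling

variable {𝒳 : Type*} [MetricSpace 𝒳] {d : ℕ}

theorem DoublingDimLE.exists_cover_pow (hd : DoublingDimLE 𝒳 d) (t : ℕ) (S : Set 𝒳) :
    ∃ 𝒞 : Finset (Set 𝒳), #𝒞 ≤ 2 ^ (d * t) ∧ S ⊆ ⋃₀ (𝒞 : Set (Set 𝒳)) ∧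
      ∀ Y ∈ 𝒞, Metric.ediam Y ≤ Metric.ediam S / 2 ^ t := by
  classical
  induction t with
  | zero => exact ⟨{S}, by simp, by simp, by simp⟩
  | succ t ih =>
    obtain ⟨𝒞, h𝒞card, h𝒞cover, h𝒞diam⟩ := ih
    choose D hDcard hDcover hDdiam using hd
    refine ⟨𝒞.biUnion D, ?_, ?_, ?_⟩
    · calc #(𝒞.biUnion D) ≤ ∑ Y ∈ 𝒞, #(D Y) := card_biUnion_le
        _ ≤ #𝒞 * 2 ^ d := sum_le_card_nsmul _ _ _ fun Y _ => hDcard Y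
        _ ≤ 2 ^ (d * (t + 1)) := by rw [mul_add_one, pow_add]; gcongr
    · intro x hx
      obtain ⟨Y, hY, hxY⟩ := h𝒞cover hx
      obtain ⟨Z, hZ, hxZ⟩ := hDcover Y hxY
      exact ⟨Z, mem_coe.2 (mem_biUnion.2 ⟨Y, hY, hZ⟩), hxZ⟩
    · intro Z hZ
      obtain ⟨Y, hY, hZY⟩ := mem_biUnion.1 hZ
      calc Metric.ediam Z ≤ Metric.ediam Y / 2 := hDdiam Y Z hZY
        _ ≤ Metric.ediam S / 2 ^ t / 2 := by gcongr; exact h𝒞diam Y hY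
        _ = Metric.ediam S / 2 ^ (t + 1) := by
          rw [pow_succ, div_eq_mul_inv, div_eq_mul_inv, div_eq_mul_inv, mul_assoc,
            ENNReal.mul_inv (by simp) (by simp)]

theorem DoublingDimLE.exists_finset_dist_le (hd : DoublingDimLE 𝒳 d) (t : ℕ) {S : Set 𝒳}
    {c : 𝒳} {R : ℝ} (hS : S ⊆ Metric.closedBall c R) :
    ∃ ξ : Finset 𝒳, #ξ ≤ 2 ^ (d * t) ∧ ∀ p ∈ S, ∃ q ∈ ξ, dist p q ≤ 2 * R / 2 ^ t := by
  classical
  rcases S.eq_empty_or_nonempty with rfl | ⟨x₀, hx₀⟩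
  · exact ⟨∅, by simp, by simp⟩
  obtain ⟨𝒞, h𝒞card, h𝒞cover, h𝒞diam⟩ := hd.exists_cover_pow t S
  have hpick : ∀ Y : Set 𝒳, ∃ q, (Y ∩ S).Nonempty → q ∈ Y ∩ S := fun Y =>
    if h : (Y ∩ S).Nonempty then ⟨h.some, fun _ => h.some_mem⟩ else ⟨x₀, fun h' => absurd h' h⟩
  choose f hf using hpick
  refine ⟨𝒞.image f, card_image_le.trans h𝒞card, fun p hp => ?_⟩
  obtain ⟨Y, hY, hpY⟩ := h𝒞cover hp
  refine ⟨f Y, mem_image_of_mem f hY, ?_⟩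
  have hSdiam : Metric.ediam S ≤ ENNReal.ofReal (2 * R) :=
    Metric.ediam_le_of_forall_dist_le fun x hx y hy => calc
      dist x y ≤ dist x c + dist y c := dist_triangle_right x y c
      _ ≤ 2 * R := by linarith [Metric.mem_closedBall.1 (hS hx), Metric.mem_closedBall.1 (hS hy)]
  have key : edist p (f Y) ≤ ENNReal.ofReal (2 * R / 2 ^ t) :=
    calc edist p (f Y) ≤ Metric.ediam Y := Metric.edist_le_ediam_of_mem hpY (hf Y ⟨p, hpY, hp⟩).1
      _ ≤ Metric.ediam S / 2 ^ t := h𝒞diam Y hY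
      _ ≤ ENNReal.ofReal (2 * R) / 2 ^ t := by gcongr
      _ = ENNReal.ofReal (2 * R / 2 ^ t) := by
        rw [ENNReal.ofReal_div_of_pos (by positivity), ENNReal.ofReal_pow zero_le_two,
          ENNReal.ofReal_ofNat]
  have hR : 0 ≤ R := dist_nonneg.trans (Metric.mem_closedBall.1 (hS hx₀))
  rwa [edist_dist, ENNReal.ofReal_le_ofReal_iff (by positivity)] at key

end Doubling

theorem exists_le_pow_mul_le_add {θ ρ r : ℝ} {J : ℕ} (hθ : 0 ≤ θ) (hρ : 0 ≤ ρ) (hr : 0 ≤ r)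
    (hJ : r ≤ θ ^ J * ρ) : ∃ j ≤ J, r ≤ θ ^ j * ρ ∧ θ ^ j * ρ ≤ ρ + θ * r := by
  have hex : ∃ j, r ≤ θ ^ j * ρ := ⟨J, hJ⟩
  refine ⟨Nat.find hex, Nat.find_min' hex hJ, Nat.find_spec hex, ?_⟩
  rcases h : Nat.find hex with _ | j
  · simpa using mul_nonneg hθ hr
  · have hlt : θ ^ j * ρ < r := not_le.1 (Nat.find_min hex (by omega))
    rw [pow_succ, mul_right_comm]
    nlinarith

section Cost

variable {𝒳 : Type*} [MetricSpace 𝒳] {n : ℕ}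

theorem sInf_dist_image_nonneg (x : 𝒳) (C : Finset 𝒳) :
    0 ≤ sInf ((fun c => dist x c) '' (C : Set 𝒳)) :=
  Real.sInf_nonneg (by rintro r ⟨c, _, rfl⟩; exact dist_nonneg)

theorem sInf_dist_image_le_medCost (C : Finset 𝒳) (X : Fin n → 𝒳) (i : Fin n) :
    sInf ((fun c => dist (X i) c) '' (C : Set 𝒳)) ≤ medCost C X :=
  single_le_sum (fun j _ => sInf_dist_image_nonneg (X j) C) (mem_univ i)

theorem medCost_nonneg (C : Finset 𝒳) (X : Fin n → 𝒳) : 0 ≤ medCost C X :=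
  sum_nonneg fun i _ => sInf_dist_image_nonneg (X i) C

theorem medOpt_nonneg (k : ℕ) (X : Fin n → 𝒳) : 0 ≤ medOpt k X :=
  Real.sInf_nonneg (by rintro r ⟨C, _, rfl⟩; exact medCost_nonneg C X)

theorem medCost_le_sum {ξ : Finset 𝒳} {X : Fin n → 𝒳} {b : Fin n → ℝ}
    (h : ∀ i, ∃ q ∈ ξ, dist (X i) q ≤ b i) : medCost ξ X ≤ ∑ i, b i :=
  sum_le_sum fun i _ =>
    let ⟨q, hq, hle⟩ := h i
    csInf_le_of_le ⟨0, by rintro r ⟨c, _, rfl⟩; exact dist_nonneg⟩ ⟨q, hq, rfl⟩ hle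

theorem medCost_image_self [DecidableEq 𝒳] (X : Fin n → 𝒳) : medCost (univ.image X) X = 0 :=
  le_antisymm
    ((medCost_le_sum fun i => ⟨X i, mem_image_of_mem X (mem_univ i), (dist_self _).le⟩).trans
      sum_const_zero.le)
    (medCost_nonneg _ X)

theorem exists_medCost_eq_sum_dist {C : Finset 𝒳} (hC : C.Nonempty) (X : Fin n → 𝒳) :
    ∃ a : Fin n → 𝒳, (∀ i, a i ∈ C) ∧ medCost C X = ∑ i, dist (X i) (a i) := by
  have hmin : ∀ i, ∃ c ∈ C, dist (X i) c = sInf ((fun c => dist (X i) c) '' (C : Set 𝒳)) :=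
    fun i => ((coe_nonempty.2 hC).image (fun c => dist (X i) c)).csInf_mem (C.finite_toSet.image _)
  choose a haC ha using hmin
  exact ⟨a, haC, sum_congr rfl fun i _ => (ha i).symm⟩

/-- Pigeonhole: a ball of radius `ρ / 2` contains at most one point of the `ρ`-separated `V`. -/
theorem exists_forall_half_le_dist_of_card_lt {V C : Finset 𝒳} {ρ : ℝ}
    (hV : ∀ v ∈ V, ∀ w ∈ V, v ≠ w → ρ ≤ dist v w) (hcard : #C < #V) :
    ∃ v ∈ V, ∀ c ∈ C, ρ / 2 ≤ dist v c := by
  by_contra! hnear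
  have hsel : ∀ v : V, ∃ c : C, dist (v : 𝒳) c < ρ / 2 := fun v =>
    let ⟨c, hc, hvc⟩ := hnear v v.2
    ⟨⟨c, hc⟩, hvc⟩
  choose f hf using hsel
  obtain ⟨v, w, hvw, hfvw⟩ := Fintype.exists_ne_map_eq_of_card_lt f (by simpa using hcard)
  have hsep := hV v v.2 w w.2 (Subtype.coe_ne_coe.2 hvw)
  have hw := hf w
  rw [← hfvw] at hw
  linarith [dist_triangle_right (v : 𝒳) w (f v), hf v]

theorem medOpt_pos_of_lt_card_image [DecidableEq 𝒳] {k : ℕ} (hk : 1 ≤ k) {X : Fin n → 𝒳}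
    (hkV : k < #(univ.image X)) : 0 < medOpt k X := by
  set V := univ.image X
  obtain ⟨v, hv, w, hw, hvw⟩ := one_lt_card.1 (hk.trans_lt hkV)
  obtain ⟨p, hp, hpmin⟩ := V.offDiag.exists_min_image (fun p => dist p.1 p.2)
    ⟨(v, w), mem_offDiag.2 ⟨hv, hw, hvw⟩⟩
  have hρ : 0 < dist p.1 p.2 := dist_pos.2 (mem_offDiag.1 hp).2.2
  obtain ⟨C₀, -, hC₀⟩ := exists_subset_card_eq hkV.le
  refine (half_pos hρ).trans_le ?_
  refine le_csInf ⟨_, C₀, hC₀, rfl⟩ ?_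
  rintro _ ⟨C, hC, rfl⟩
  obtain ⟨x, hx, hfar⟩ := exists_forall_half_le_dist_of_card_lt
    (fun v hv w hw hvw => hpmin (v, w) (mem_offDiag.2 ⟨hv, hw, hvw⟩)) (hC ▸ hkV)
  obtain ⟨i, -, rfl⟩ := mem_image.1 hx
  have hCne : C.Nonempty := card_pos.1 (by omega)
  exact (le_csInf ((coe_nonempty.2 hCne).image _) (by rintro _ ⟨c, hc, rfl⟩; exact hfar c hc)).trans
    (sInf_dist_image_le_medCost C X i)

theorem exists_card_eq_medCost_lt {k : ℕ} {X : Fin n → 𝒳} {b : ℝ} (hpos : 0 < medOpt k X)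
    (hb : medOpt k X < b) : ∃ C : Finset 𝒳, #C = k ∧ medCost C X < b := by
  have hne : {r : ℝ | ∃ C : Finset 𝒳, #C = k ∧ medCost C X = r}.Nonempty := by
    by_contra hempty
    rw [Set.not_nonempty_iff_eq_empty] at hempty
    rw [medOpt, hempty, Real.sInf_empty] at hpos
    exact lt_irrefl 0 hpos
  obtain ⟨_, ⟨C, hC, rfl⟩, hCb⟩ := exists_lt_of_csInf_lt hne hb
  exact ⟨C, hC, hCb⟩

end Cost

section Construction

variable {𝒳 : Type*} [MetricSpace 𝒳] {d : ℕ}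

theorem DoublingDimLE.exists_ring_net (hd : DoublingDimLE 𝒳 d) {ι : Type*} [Fintype ι]
    (C : Finset 𝒳) {x a : ι → 𝒳} (ha : ∀ i, a i ∈ C) {θ ρ : ℝ} (hθ : 0 ≤ θ) (hρ : 0 ≤ ρ)
    (J t : ℕ) (hJ : ∀ i, dist (x i) (a i) ≤ θ ^ J * ρ) :
    ∃ ξ : Finset 𝒳, #ξ ≤ #C * (J + 1) * 2 ^ (d * t) ∧
      ∀ i, ∃ q ∈ ξ, dist (x i) q ≤ 2 * (ρ + θ * dist (x i) (a i)) / 2 ^ t := by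
  classical
  choose j hjJ hj_le hj_ge using fun i => exists_le_pow_mul_le_add hθ hρ dist_nonneg (hJ i)
  have hnet : ∀ q : 𝒳 × ℕ, ∃ η : Finset 𝒳, #η ≤ 2 ^ (d * t) ∧
      ∀ i, a i = q.1 → j i = q.2 → ∃ z ∈ η, dist (x i) z ≤ 2 * (θ ^ q.2 * ρ) / 2 ^ t := by
    rintro ⟨c, m⟩
    obtain ⟨η, hηcard, hη⟩ := hd.exists_finset_dist_le t
      (S := x '' {i | a i = c ∧ j i = m}) (c := c) (R := θ ^ m * ρ)
      (by rintro _ ⟨i, ⟨rfl, rfl⟩, rfl⟩; exact Metric.mem_closedBall.2 (hj_le i))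
    exact ⟨η, hηcard, fun i hi hj => hη _ ⟨i, ⟨hi, hj⟩, rfl⟩⟩
  choose η hηcard hη using hnet
  refine ⟨(C ×ˢ range (J + 1)).biUnion η, ?_, fun i => ?_⟩
  · calc #((C ×ˢ range (J + 1)).biUnion η) ≤ ∑ q ∈ C ×ˢ range (J + 1), #(η q) := card_biUnion_le
      _ ≤ #(C ×ˢ range (J + 1)) * 2 ^ (d * t) := sum_le_card_nsmul _ _ _ fun q _ => hηcard q
      _ = #C * (J + 1) * 2 ^ (d * t) := by rw [card_product, card_range]
  · obtain ⟨z, hz, hdist⟩ := hη (a i, j i) i rfl rfl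
    refine ⟨z, mem_biUnion.2 ⟨(a i, j i), mem_product.2 ⟨ha i, ?_⟩, hz⟩, hdist.trans ?_⟩
    · exact mem_range.2 (Nat.lt_succ_of_le (hjJ i))
    · gcongr
      exact hj_ge i

variable {n : ℕ}

theorem DoublingDimLE.exists_medCost_le (hd : DoublingDimLE 𝒳 d) {ε : ℝ} (hε : 0 < ε)
    (hε8 : ε ≤ 8) {J : ℕ} (hn : 2 ≤ n) (hJ : (n : ℝ) ^ 2 ≤ (7 / 5) ^ J) {C : Finset 𝒳}
    (hC : C.Nonempty) (X : Fin n → 𝒳) :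
    ∃ ξ : Finset 𝒳, ξ.Nonempty ∧ (#ξ : ℝ) ≤ #C * (J + 1) * (8 / ε) ^ d ∧
      medCost ξ X ≤ 19 / 20 * ε * medCost C X := by
  obtain ⟨a, haC, hΦ⟩ := exists_medCost_eq_sum_dist hC X
  set Φ := medCost C X
  set ρ := Φ / n ^ 2 with hρdef
  have hρ : 0 ≤ ρ := div_nonneg (medCost_nonneg C X) (sq_nonneg _)
  have hJ' : ∀ i, dist (X i) (a i) ≤ (7 / 5) ^ J * ρ := fun i => calc
    dist (X i) (a i) ≤ Φ := hΦ ▸ single_le_sum (fun j _ => dist_nonneg) (mem_univ i)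
    _ = n ^ 2 * ρ := by rw [hρdef]; field_simp
    _ ≤ (7 / 5) ^ J * ρ := by gcongr
  obtain ⟨t, ht_le, ht_gt⟩ := exists_nat_pow_near (x := 8 / ε) (y := (2 : ℝ))
    (by rw [le_div_iff₀ hε]; linarith) one_lt_two
  obtain ⟨ξ, hξcard, hξ⟩ := hd.exists_ring_net C haC (by norm_num) hρ J t hJ'
  refine ⟨ξ, ?_, ?_, ?_⟩
  · obtain ⟨q, hq, -⟩ := hξ ⟨0, by omega⟩
    exact ⟨q, hq⟩
  · calc (#ξ : ℝ) ≤ #C * (J + 1) * (2 ^ t) ^ d := by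
          rw [← pow_mul, mul_comm t]; exact_mod_cast hξcard
      _ ≤ #C * (J + 1) * (8 / ε) ^ d := by gcongr
  · have hscale : 2 / 2 ^ t ≤ ε / 2 := by
      rw [pow_succ, div_lt_iff₀ hε] at ht_gt
      rw [div_le_div_iff₀ (by positivity) two_pos]
      linarith
    have hnρ : n * ρ ≤ Φ / 2 := by
      rw [show n * ρ = Φ / n by rw [hρdef]; field_simp]
      gcongr
      · exact medCost_nonneg C X
      · exact_mod_cast hn
    calc medCost ξ X ≤ ∑ i, 2 * (ρ + 7 / 5 * dist (X i) (a i)) / 2 ^ t := medCost_le_sum hξ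
      _ ≤ ∑ i, ε / 2 * (ρ + 7 / 5 * dist (X i) (a i)) := by
        gcongr with i
        rw [mul_div_right_comm]
        gcongr
      _ = ε / 2 * (n * ρ + 7 / 5 * Φ) := by
        rw [← mul_sum, sum_add_distrib, ← mul_sum, ← hΦ, sum_const, card_univ, Fintype.card_fin,
          nsmul_eq_mul]
      _ ≤ 19 / 20 * ε * Φ := by nlinarith

end Construction

theorem sq_le_seven_fifths_pow_ceil_log {x : ℝ} (hx : 0 < x) :
    x ^ 2 ≤ (7 / 5 : ℝ) ^ (7 * ⌈Real.log x⌉₊) := by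
  have he : Real.exp 2 ≤ (7 / 5 : ℝ) ^ 7 := by
    have h := Real.exp_one_lt_d9
    rw [show Real.exp 2 = Real.exp 1 ^ 2 by rw [← Real.exp_nat_mul]; norm_num]
    nlinarith [Real.exp_pos 1]
  calc x ^ 2 = Real.exp (2 * Real.log x) := by
        rw [show (2 : ℝ) = (2 : ℕ) by norm_num, Real.exp_nat_mul, Real.exp_log hx]
    _ ≤ Real.exp (⌈Real.log x⌉₊ * 2) := Real.exp_le_exp.2 (by linarith [Nat.le_ceil (Real.log x)])
    _ = Real.exp 2 ^ ⌈Real.log x⌉₊ := Real.exp_nat_mul 2 _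
    _ ≤ ((7 / 5 : ℝ) ^ 7) ^ ⌈Real.log x⌉₊ := by gcongr
    _ = (7 / 5 : ℝ) ^ (7 * ⌈Real.log x⌉₊) := (pow_mul _ _ _).symm

theorem seven_mul_ceil_log_add_one_le {x : ℝ} (hx : 2 ≤ x) :
    ((7 * ⌈Real.log x⌉₊ : ℕ) : ℝ) + 1 ≤ 20 * Real.log x := by
  have hlog : 0.6931471803 < Real.log x :=
    Real.log_two_gt_d9.trans_le (Real.log_le_log two_pos hx)
  have hceil := Nat.ceil_lt_add_one (Real.log_nonneg (by linarith) : 0 ≤ Real.log x)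
  push_cast
  linarith

/-- upper bound for metric k-median. There is a universal
constant `c > 0` such that for every metric space `𝒳` of doubling dimension at
most `d`, every `0 < ε ≤ 1`, `k ≥ 1` and every family `X` of `n ≥ 2` points in `𝒳`,
there is a finite set `ξ ⊆ 𝒳` with `|ξ| ≤ c · k · log n · (8/ε)^d` and
`Φ(ξ, X) ≤ ε · Δ_k(X)`. -/
theorem metric_kmedian_upper_bound :
    ∃ c : ℝ, 0 < c ∧
      ∀ (𝒳 : Type) [MetricSpace 𝒳], ∀ d : ℕ, DoublingDimLE 𝒳 d →
      ∀ ε : ℝ, 0 < ε → ε ≤ 1 →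
      ∀ k : ℕ, 1 ≤ k →
      ∀ n : ℕ, 2 ≤ n →
      ∀ X : Fin n → 𝒳,
        ∃ ξ : Finset 𝒳, ξ.Nonempty ∧
          (ξ.card : ℝ) ≤ c * k * Real.log n * (8 / ε) ^ d ∧
          medCost ξ X ≤ ε * medOpt k X := by
  refine ⟨20, by norm_num, fun 𝒳 _ d hd ε hε hε1 k hk n hn X => ?_⟩
  classical
  have hn' : (2 : ℝ) ≤ n := by exact_mod_cast hn
  have hbound : (k : ℝ) * (((7 * ⌈Real.log n⌉₊ : ℕ) : ℝ) + 1) * (8 / ε) ^ d ≤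
      20 * k * Real.log n * (8 / ε) ^ d := by
    rw [mul_comm 20, mul_assoc (k : ℝ) 20]
    gcongr
    exact seven_mul_ceil_log_add_one_le hn'
  by_cases hV : #(univ.image X) ≤ k
  · refine ⟨univ.image X, ⟨X ⟨0, by omega⟩, mem_image_of_mem X (mem_univ _)⟩, ?_, ?_⟩
    · refine le_trans ?_ hbound
      calc (#(univ.image X) : ℝ) ≤ k * 1 * 1 := by rw [mul_one, mul_one]; exact_mod_cast hV
        _ ≤ k * (((7 * ⌈Real.log n⌉₊ : ℕ) : ℝ) + 1) * (8 / ε) ^ d := by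
          gcongr
          · exact le_add_of_nonneg_left (Nat.cast_nonneg _)
          · exact one_le_pow₀ ((one_le_div hε).2 (by linarith))
    · rw [medCost_image_self]
      exact mul_nonneg hε.le (medOpt_nonneg k X)
  · have hΔ := medOpt_pos_of_lt_card_image hk (not_le.1 hV)
    obtain ⟨C, hCk, hC⟩ := exists_card_eq_medCost_lt hΔ (lt_mul_of_one_lt_left hΔ
      (by norm_num : (1 : ℝ) < 20 / 19))
    obtain ⟨ξ, hξ, hξcard, hξcost⟩ := hd.exists_medCost_le hε (by linarith) hn
      (sq_le_seven_fifths_pow_ceil_log (by linarith)) (card_pos.1 (hCk ▸ hk)) X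
    refine ⟨ξ, hξ, hξcard.trans ?_, hξcost.trans ?_⟩
    · rwa [hCk]
    · nlinarith
end
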